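/- arXiv:1908.10106 — 8 statements merged into one kernel-verified Lean document; each statement's English description precedes it below -/
import Mathlib

section
/- Let Φ be a holomorphic map of the unit disk into itself and let p be a point on the unit circle with Φ(p) = p. If Φ has a (complex) derivative at p, then Φ'(p) is a real number satisfying Φ'(p) ≥ (1 - |Φ(0)|)/(1 + |Φ(0)|) > 0. -/
open Complex Metric

lemma arith_aux (s r x R : ℝ) (hs0 : 0 ≤ s) (hr0 : 0 ≤ r) (hx0 : 0 ≤ x)
    (hs1 : s < 1) (hr1 : r < 1) (hx1 : x < 1) (hR : R ≤ s * x)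
    (h1 : x ^ 2 + s ^ 2 - 2 * R ≤ r ^ 2 * (1 - 2 * R + s ^ 2 * x ^ 2)) :
    (1 - s) / (1 + s) * (1 - r) ≤ 1 - x := by
  have hmain : x * (1 + s * r) ≤ s + r := by
    have hF : ((1 + r * s) * x - (s + r)) * ((1 - r * s) * x - (s - r)) ≤ 0 := by
      nlinarith [h1, mul_le_mul_of_nonneg_left hR (show (0:ℝ) ≤ 1 - r ^ 2 by nlinarith)]
    rcases le_or_gt ((1 - r * s) * x) (s - r) with h2 | h2
    · nlinarith [mul_le_mul_of_nonneg_left h2 (show (0:ℝ) ≤ 1 + r * s by positivity),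
        mul_nonneg hr0 hs0, mul_nonneg hr0 hx0]
    · nlinarith [hF, h2]
  rw [div_mul_eq_mul_div, div_le_iff₀ (by positivity : (0:ℝ) < 1 + s)]
  have step2 : (1 - x) * (1 + s * r) ≤ (1 - x) * (1 + s) := by
    apply mul_le_mul_of_nonneg_left _ (by linarith)
    nlinarith
  nlinarith [hmain]

lemma sp_aux (Φ : ℂ → ℂ)
    (hΦ : DifferentiableOn ℂ Φ (ball (0 : ℂ) 1))
    (hmaps : Set.MapsTo Φ (ball (0 : ℂ) 1) (ball (0 : ℂ) 1))
    {z : ℂ} (hz : z ∈ ball (0 : ℂ) 1) :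
    (1 - ‖Φ 0‖) / (1 + ‖Φ 0‖) * (1 - ‖z‖) ≤ 1 - ‖Φ z‖ := by
  set a := Φ 0 with ha
  have hs1 : ‖a‖ < 1 := mem_ball_zero_iff.1 (hmaps (mem_ball_self one_pos))
  have hden : ∀ w : ℂ, ‖w‖ < 1 → 1 - (starRingEnd ℂ) a * w ≠ 0 := by
    intro w hw h
    rw [sub_eq_zero] at h
    have h1 : ‖(starRingEnd ℂ) a * w‖ = 1 := by rw [← h]; simp
    rw [norm_mul, RCLike.norm_conj] at h1
    nlinarith [norm_nonneg a, norm_nonneg w]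
  have hid : ∀ w : ℂ, normSq (1 - (starRingEnd ℂ) a * w) - normSq (w - a)
      = (1 - normSq a) * (1 - normSq w) := by
    intro w
    simp only [normSq_apply, sub_re, sub_im, mul_re, mul_im, one_re, one_im,
      conj_re, conj_im]
    ring
  set ψ : ℂ → ℂ := fun w => (Φ w - a) / (1 - (starRingEnd ℂ) a * Φ w) with hψ
  have hψd : DifferentiableOn ℂ ψ (ball 0 1) := by
    apply DifferentiableOn.div (hΦ.sub_const a)
      ((differentiableOn_const _).sub ((differentiableOn_const _).mul hΦ))
    exact fun w hw => hden _ (mem_ball_zero_iff.1 (hmaps hw))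
  have hψ0 : ψ 0 = 0 := by simp [hψ, ← ha]
  have hψlt : ∀ w ∈ ball (0:ℂ) 1, ‖Φ w - a‖ < ‖1 - (starRingEnd ℂ) a * Φ w‖ := by
    intro w hw
    have hw' : ‖Φ w‖ < 1 := mem_ball_zero_iff.1 (hmaps hw)
    have h1 : normSq (Φ w - a) < normSq (1 - (starRingEnd ℂ) a * Φ w) := by
      have h2 := hid (Φ w)
      have h3 : normSq a < 1 := by
        rw [← Complex.sq_norm]; nlinarith [norm_nonneg a]
      have h4 : normSq (Φ w) < 1 := by
        rw [← Complex.sq_norm]; nlinarith [norm_nonneg (Φ w)]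
      nlinarith
    have e1 : ‖Φ w - a‖ ^ 2 = normSq (Φ w - a) := by
      rw [Complex.sq_norm]
    have e2 : ‖1 - (starRingEnd ℂ) a * Φ w‖ ^ 2 = normSq (1 - (starRingEnd ℂ) a * Φ w) := by
      rw [Complex.sq_norm]
    nlinarith [norm_nonneg (Φ w - a), norm_nonneg (1 - (starRingEnd ℂ) a * Φ w)]
  have hψmaps : Set.MapsTo ψ (ball (0:ℂ) 1) (ball (0:ℂ) 1) := by
    intro w hw
    rw [mem_ball_zero_iff, hψ]
    have h := hψlt w hw
    have hpos : 0 < ‖1 - (starRingEnd ℂ) a * Φ w‖ :=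
      norm_pos_iff.2 (hden _ (mem_ball_zero_iff.1 (hmaps hw)))
    rw [norm_div, div_lt_one hpos]
    exact h
  have hSch : ‖ψ z‖ ≤ ‖z‖ := by
    simpa [hψ0] using Complex.dist_le_dist_of_mapsTo_ball_self hψd
      (hψmaps.mono_right (by rw [hψ0]; exact ball_subset_closedBall)) hz
  have hpos : 0 < ‖1 - (starRingEnd ℂ) a * Φ z‖ :=
    norm_pos_iff.2 (hden _ (mem_ball_zero_iff.1 (hmaps hz)))
  have hkey : ‖Φ z - a‖ ≤ ‖z‖ * ‖1 - (starRingEnd ℂ) a * Φ z‖ := by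
    rw [hψ] at hSch
    simp only [norm_div] at hSch
    calc ‖Φ z - a‖ = ‖Φ z - a‖ / ‖1 - (starRingEnd ℂ) a * Φ z‖ * ‖1 - (starRingEnd ℂ) a * Φ z‖ := by
          rw [div_mul_cancel₀ _ hpos.ne']
      _ ≤ ‖z‖ * ‖1 - (starRingEnd ℂ) a * Φ z‖ :=
          mul_le_mul_of_nonneg_right hSch (norm_nonneg _)
  have hsq : normSq (Φ z - a) ≤ ‖z‖ ^ 2 * normSq (1 - (starRingEnd ℂ) a * Φ z) := by
    have e1 : ‖Φ z - a‖ ^ 2 = normSq (Φ z - a) := by rw [Complex.sq_norm]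
    have e2 : ‖1 - (starRingEnd ℂ) a * Φ z‖ ^ 2 = normSq (1 - (starRingEnd ℂ) a * Φ z) := by
      rw [Complex.sq_norm]
    nlinarith [norm_nonneg (Φ z - a), norm_nonneg z,
      mul_nonneg (norm_nonneg z) (norm_nonneg (1 - (starRingEnd ℂ) a * Φ z))]
  have hexp1 : normSq (Φ z - a) = ‖Φ z‖ ^ 2 + ‖a‖ ^ 2 - 2 * (Φ z * (starRingEnd ℂ) a).re := by
    rw [normSq_sub, Complex.sq_norm, Complex.sq_norm]
  have e3 : normSq a = ‖a‖ ^ 2 := by rw [Complex.sq_norm]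
  have e4 : normSq (Φ z) = ‖Φ z‖ ^ 2 := by rw [Complex.sq_norm]
  have hexp2 : normSq (1 - (starRingEnd ℂ) a * Φ z)
      = 1 - 2 * (Φ z * (starRingEnd ℂ) a).re + ‖a‖ ^ 2 * ‖Φ z‖ ^ 2 := by
    have h5 := hid (Φ z)
    rw [hexp1, e3, e4] at h5
    nlinarith [h5]
  have hR : (Φ z * (starRingEnd ℂ) a).re ≤ ‖a‖ * ‖Φ z‖ := by
    calc (Φ z * (starRingEnd ℂ) a).re ≤ |(Φ z * (starRingEnd ℂ) a).re| := le_abs_self _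
      _ ≤ ‖Φ z * (starRingEnd ℂ) a‖ := Complex.abs_re_le_norm _
      _ = ‖a‖ * ‖Φ z‖ := by
          rw [norm_mul]
          simp [mul_comm]
  have h1 : ‖Φ z‖ ^ 2 + ‖a‖ ^ 2 - 2 * (Φ z * (starRingEnd ℂ) a).re
      ≤ ‖z‖ ^ 2 * (1 - 2 * (Φ z * (starRingEnd ℂ) a).re + ‖a‖ ^ 2 * ‖Φ z‖ ^ 2) := by
    rw [← hexp1, ← hexp2]; exact hsq
  exact arith_aux ‖a‖ ‖z‖ ‖Φ z‖ _ (norm_nonneg _) (norm_nonneg _) (norm_nonneg _)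
    hs1 (mem_ball_zero_iff.1 hz) (mem_ball_zero_iff.1 (hmaps hz)) hR h1

/-- Boundary Schwarz lemma at a fixed boundary point: if `Φ` maps the unit disk
holomorphically into itself, fixes the boundary point `p` (|p| = 1), and has a
complex derivative `d` at `p`, then `d` is real and
`d ≥ (1 - |Φ(0)|)/(1 + |Φ(0)|) > 0`. -/
theorem stmt_0 (Φ : ℂ → ℂ) (p d : ℂ)
    (hΦ : DifferentiableOn ℂ Φ (ball (0 : ℂ) 1))
    (hmaps : Set.MapsTo Φ (ball (0 : ℂ) 1) (ball (0 : ℂ) 1))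
    (hp : ‖p‖ = 1) (hfix : Φ p = p)
    (hderiv : HasDerivAt Φ d p) :
    d.im = 0 ∧ (1 - ‖Φ 0‖) / (1 + ‖Φ 0‖) ≤ d.re ∧
      0 < (1 - ‖Φ 0‖) / (1 + ‖Φ 0‖) := by
  have hp0 : p ≠ 0 := by
    intro h; rw [h] at hp; simp at hp
  have hnp : normSq p = 1 := by
    rw [← Complex.sq_norm, hp]; norm_num
  set c := (1 - ‖Φ 0‖) / (1 + ‖Φ 0‖) with hc
  have hs1 : ‖Φ 0‖ < 1 := mem_ball_zero_iff.1 (hmaps (mem_ball_self one_pos))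
  have hcpos : 0 < c :=
    div_pos (by linarith) (by linarith [norm_nonneg (Φ 0)])
  have hball : ∀ u : ℂ, u.re = 1 → ∀ᶠ t : ℝ in nhdsWithin (0:ℝ) (Set.Ioi 0),
      p * (1 - (t:ℂ) * u) ∈ ball (0:ℂ) 1 := by
    intro u hu
    have hupos : 0 < normSq u := by
      rw [normSq_apply, hu]; nlinarith [sq_nonneg u.im, mul_self_nonneg u.im]
    filter_upwards [Ioo_mem_nhdsGT_of_mem
      (Set.mem_Ico.2 ⟨le_refl (0:ℝ), div_pos two_pos hupos⟩ : (0:ℝ) ∈ Set.Ico 0 (2 / normSq u))]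
      with t ht
    obtain ⟨ht0, ht2⟩ := ht
    rw [mem_ball_zero_iff, norm_mul, hp, one_mul]
    have hns : normSq (1 - (t:ℂ) * u) = 1 - 2 * t + t ^ 2 * normSq u := by
      simp only [normSq_apply, sub_re, sub_im, one_re, one_im, mul_re, mul_im,
        ofReal_re, ofReal_im, hu]
      ring
    have hlt : normSq (1 - (t:ℂ) * u) < 1 := by
      rw [hns]
      have := (lt_div_iff₀ hupos).1 ht2
      nlinarith
    have e : ‖1 - (t:ℂ) * u‖ ^ 2 = normSq (1 - (t:ℂ) * u) := by
      rw [Complex.sq_norm]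
    nlinarith [norm_nonneg (1 - (t:ℂ) * u)]
  have claim : ∀ u : ℂ, u.re = 1 → ∀ b : ℝ,
      (∀ᶠ t : ℝ in nhdsWithin (0:ℝ) (Set.Ioi 0), b * t ≤ 1 - ‖p * (1 - (t:ℂ) * u)‖) →
      c * b ≤ (d * u).re := by
    intro u hu b hb
    have hu0 : u ≠ 0 := fun h => by simp [h] at hu
    set γ : ℝ → ℂ := fun t => p * (1 - (t:ℂ) * u) with hγ
    have hγne : ∀ t : ℝ, 0 < t → γ t ≠ p := by
      intro t ht h
      have h2 : (t:ℂ) * u * p = 0 := by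
        have h' : p * (1 - (t:ℂ) * u) = p := h
        linear_combination -h'
      rcases mul_eq_zero.1 h2 with h3 | h3
      · rcases mul_eq_zero.1 h3 with h4 | h4
        · exact ht.ne' (by exact_mod_cast h4)
        · exact hu0 h4
      · exact hp0 h3
    have hcont : Continuous γ := by
      apply continuous_const.mul
      exact continuous_const.sub (Complex.continuous_ofReal.mul continuous_const)
    have htend_nhds : Filter.Tendsto γ (nhdsWithin 0 (Set.Ioi 0)) (nhds p) :=
      (hcont.tendsto' 0 p (by simp [hγ])).mono_left nhdsWithin_le_nhds
    have htend : Filter.Tendsto γ (nhdsWithin 0 (Set.Ioi 0)) (nhdsWithin p {p}ᶜ) := by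
      rw [tendsto_nhdsWithin_iff]
      exact ⟨htend_nhds, Filter.eventually_of_mem self_mem_nhdsWithin
        (fun t ht => hγne t ht)⟩
    have hslope : Filter.Tendsto (fun t => slope Φ p (γ t))
        (nhdsWithin 0 (Set.Ioi 0)) (nhds d) :=
      (hasDerivAt_iff_tendsto_slope.1 hderiv).comp htend
    have hFt : Filter.Tendsto (fun t => slope Φ p (γ t) * (u * p) * (starRingEnd ℂ) p)
        (nhdsWithin 0 (Set.Ioi 0)) (nhds (d * (u * p) * (starRingEnd ℂ) p)) :=
      (hslope.mul_const _).mul_const _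
    have hpp : d * (u * p) * (starRingEnd ℂ) p = d * u := by
      have h1 : p * (starRingEnd ℂ) p = 1 := by
        rw [Complex.mul_conj, hnp]; norm_num
      calc d * (u * p) * (starRingEnd ℂ) p = d * u * (p * (starRingEnd ℂ) p) := by ring
        _ = d * u := by rw [h1, mul_one]
    have hre : Filter.Tendsto (fun t => (slope Φ p (γ t) * (u * p) * (starRingEnd ℂ) p).re)
        (nhdsWithin 0 (Set.Ioi 0)) (nhds ((d * u).re)) := by
      rw [← hpp]
      exact (Complex.continuous_re.tendsto _).comp hFt
    apply ge_of_tendsto hre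
    filter_upwards [hb, hball u hu, self_mem_nhdsWithin] with t hbt hballt htpos
    have ht0 : (0:ℝ) < t := htpos
    have ht' : (t:ℂ) ≠ 0 := ofReal_ne_zero.2 ht0.ne'
    have hslope_eq : slope Φ p (γ t) * (u * p) * (starRingEnd ℂ) p
        = (p - Φ (γ t)) * (starRingEnd ℂ) p / (t:ℂ) := by
      rw [slope_def_field, hfix]
      have hγp : γ t - p = -((t:ℂ) * u * p) := by rw [hγ]; ring
      rw [hγp]
      have hup : (t:ℂ) * u * p ≠ 0 := by
        apply mul_ne_zero (mul_ne_zero ht' hu0) hp0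
      field_simp
      ring
    rw [hslope_eq, Complex.div_ofReal_re, le_div_iff₀ ht0]
    have h6 : ((p - Φ (γ t)) * (starRingEnd ℂ) p).re
        = 1 - (Φ (γ t) * (starRingEnd ℂ) p).re := by
      rw [sub_mul, Complex.sub_re, Complex.mul_conj, hnp]
      norm_num
    have h7 : (Φ (γ t) * (starRingEnd ℂ) p).re ≤ ‖Φ (γ t)‖ := by
      calc (Φ (γ t) * (starRingEnd ℂ) p).re ≤ |(Φ (γ t) * (starRingEnd ℂ) p).re| :=
            le_abs_self _
        _ ≤ ‖Φ (γ t) * (starRingEnd ℂ) p‖ := Complex.abs_re_le_norm _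
        _ = ‖Φ (γ t)‖ := by
            rw [norm_mul, RCLike.norm_conj,
              hp, mul_one]
    have h8 : c * (1 - ‖γ t‖) ≤ 1 - ‖Φ (γ t)‖ := sp_aux Φ hΦ hmaps hballt
    have h9 : b * t ≤ 1 - ‖γ t‖ := hbt
    have h10 : c * (b * t) ≤ c * (1 - ‖γ t‖) :=
      mul_le_mul_of_nonneg_left h9 hcpos.le
    rw [h6]
    nlinarith
  have him : ∀ y : ℝ, 0 ≤ d.re - y * d.im := by
    intro y
    have h := claim (1 + (y:ℂ) * I) (by simp) 0 ?_
    · have he : (d * (1 + (y:ℂ) * I)).re = d.re - y * d.im := by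
        simp only [Complex.mul_re, Complex.mul_im, Complex.add_re, Complex.add_im,
          Complex.one_re, Complex.one_im, Complex.ofReal_re, Complex.ofReal_im,
          Complex.I_re, Complex.I_im]
        ring
      rw [he] at h
      simpa using h
    · filter_upwards [hball _ (by simp : ((1:ℂ) + (y:ℂ) * I).re = 1)] with t ht
      have := mem_ball_zero_iff.1 ht
      simpa using this.le
  have hre : c ≤ d.re := by
    have h := claim 1 (by simp) 1 ?_
    · simpa using h
    · filter_upwards [Ioo_mem_nhdsGT_of_mem
        (Set.mem_Ico.2 ⟨le_refl (0:ℝ), one_pos⟩ : (0:ℝ) ∈ Set.Ico 0 1)] with t ht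
      obtain ⟨ht0, ht1⟩ := ht
      have he : ‖p * (1 - (t:ℂ) * 1)‖ = 1 - t := by
        rw [norm_mul, hp, one_mul, mul_one]
        rw [show (1:ℂ) - (t:ℂ) = ((1 - t : ℝ) : ℂ) by push_cast; ring]
        rw [Complex.norm_real]
        exact abs_of_nonneg (by linarith)
      rw [he]; linarith
  have himz : d.im = 0 := by
    by_contra h
    have h1 := him ((d.re + 1) / d.im)
    rw [div_mul_cancel₀ _ h] at h1
    linarith
  exact ⟨himz, hre, hcpos⟩
end

section
/- Let f : 𝔻 → 𝔻 be holomorphic on the unit disk, holomorphic at z = 1 (i.e. extending holomorphically past 1), with f(0) = 0 and f(1) = 1. Then f'(1) ≥ 1. -/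
open Complex Metric Filter Set Topology

/-- Boundary Schwarz lemma: if `f` maps the unit disk holomorphically into itself,
extends holomorphically past the boundary point `1`, fixes `0` and `1`, then
`f'(1)` is real and `f'(1) ≥ 1`. -/
theorem stmt_1 (f : ℂ → ℂ) (ε : ℝ) (hε : 0 < ε)
    (hf : DifferentiableOn ℂ f (ball (0 : ℂ) 1 ∪ ball (1 : ℂ) ε))
    (hmaps : Set.MapsTo f (ball (0 : ℂ) 1) (ball (0 : ℂ) 1))
    (h0 : f 0 = 0) (h1 : f 1 = 1) :
    (deriv f 1).im = 0 ∧ 1 ≤ (deriv f 1).re := by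
  have hopen : IsOpen (ball (0 : ℂ) 1 ∪ ball (1 : ℂ) ε) := isOpen_ball.union isOpen_ball
  have hdiff1 : DifferentiableAt ℂ f 1 :=
    hf.differentiableAt (hopen.mem_nhds (Or.inr (mem_ball_self hε)))
  have hslope : Tendsto (slope f 1) (𝓝[≠] (1:ℂ)) (𝓝 (deriv f 1)) :=
    hasDerivAt_iff_tendsto_slope.mp hdiff1.hasDerivAt
  -- general direction lemma
  have main : ∀ d : ℂ, 0 < d.re →
      Tendsto (fun t : ℝ => (1 - Complex.normSq (f (1 - (t:ℂ)*d))) / (2*t)) (𝓝[>] (0:ℝ))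
        (𝓝 ((d * deriv f 1).re)) ∧
      ∀ᶠ t : ℝ in 𝓝[>] (0:ℝ), ((1:ℂ) - (t:ℂ)*d) ∈ ball (0:ℂ) 1 := by
    intro d hd
    have hd0 : d ≠ 0 := fun h => by simp [h] at hd
    have hne : ∀ t : ℝ, t ≠ 0 → ((1:ℂ) - (t:ℂ)*d) ≠ 1 := by
      intro t ht h
      have h' : (t:ℂ)*d = 0 := by linear_combination -h
      rcases mul_eq_zero.mp h' with h'' | h''
      · exact ht (by exact_mod_cast h'')
      · exact hd0 h''
    have hpath : Tendsto (fun t : ℝ => (1:ℂ) - (t:ℂ)*d) (𝓝[>] (0:ℝ)) (𝓝[≠] (1:ℂ)) := by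
      apply tendsto_nhdsWithin_of_tendsto_nhds_of_eventually_within
      · have : Tendsto (fun t : ℝ => (1:ℂ) - (t:ℂ)*d) (𝓝 (0:ℝ)) (𝓝 (1 - ((0:ℝ):ℂ)*d)) :=
          tendsto_const_nhds.sub ((Complex.continuous_ofReal.tendsto 0).mul tendsto_const_nhds)
        simpa using this.mono_left nhdsWithin_le_nhds
      · filter_upwards [self_mem_nhdsWithin] with t ht
        exact hne t (ne_of_gt ht)
    have hs : Tendsto (fun t : ℝ => slope f 1 (1 - (t:ℂ)*d)) (𝓝[>] (0:ℝ)) (𝓝 (deriv f 1)) :=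
      hslope.comp hpath
    have ht0 : Tendsto (fun t : ℝ => t) (𝓝[>] (0:ℝ)) (𝓝 0) :=
      tendsto_id.mono_left nhdsWithin_le_nhds
    have hg : Tendsto (fun t : ℝ => (d * slope f 1 (1 - (t:ℂ)*d)).re
        - t/2 * Complex.normSq (d * slope f 1 (1 - (t:ℂ)*d))) (𝓝[>] (0:ℝ))
        (𝓝 ((d * deriv f 1).re)) := by
      have h1' : Tendsto (fun t : ℝ => (d * slope f 1 (1 - (t:ℂ)*d)).re) (𝓝[>] (0:ℝ))
          (𝓝 ((d * deriv f 1).re)) :=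
        (Complex.continuous_re.tendsto _).comp (tendsto_const_nhds.mul hs)
      have h2' : Tendsto (fun t : ℝ => t/2 * Complex.normSq (d * slope f 1 (1 - (t:ℂ)*d)))
          (𝓝[>] (0:ℝ)) (𝓝 (0/2 * Complex.normSq (d * deriv f 1))) :=
        (ht0.div_const 2).mul ((Complex.continuous_normSq.tendsto _).comp
          (tendsto_const_nhds.mul hs))
      simpa using h1'.sub h2'
    constructor
    · -- identify the two expressions eventually
      refine hg.congr' ?_
      filter_upwards [self_mem_nhdsWithin] with t ht
      have htne : (t:ℝ) ≠ 0 := ne_of_gt ht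
      have hz : ((1:ℂ) - (t:ℂ)*d) ≠ 1 := hne t htne
      set s := slope f 1 (1 - (t:ℂ)*d) with hsdef
      have htd : ((t:ℂ)*d) ≠ 0 :=
        mul_ne_zero (by exact_mod_cast htne) hd0
      have hkey : (t:ℂ)*d*s = 1 - f (1 - (t:ℂ)*d) := by
        rw [hsdef, slope_def_field, h1,
          show ((1:ℂ) - (t:ℂ)*d) - 1 = -((t:ℂ)*d) by ring,
          div_neg, mul_neg, mul_comm ((t:ℂ)*d), div_mul_cancel₀ _ htd]
        ring
      have hfz : f (1 - (t:ℂ)*d) = 1 - (t:ℂ)*d*s := by linear_combination hkey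
      rw [hfz]
      have hns : Complex.normSq (1 - (t:ℂ)*d*s) =
          1 - 2*t*(d*s).re + t^2 * Complex.normSq (d*s) := by
        simp only [Complex.normSq_apply, Complex.sub_re, Complex.sub_im, Complex.mul_re,
          Complex.mul_im, Complex.one_re, Complex.one_im, Complex.ofReal_re, Complex.ofReal_im]
        ring
      rw [hns]
      field_simp
      ring
    · have hr : 0 < 2 * d.re / Complex.normSq d :=
        div_pos (by linarith) (Complex.normSq_pos.mpr hd0)
      filter_upwards [Ioo_mem_nhdsGT hr] with t ht
      obtain ⟨ht0', ht1'⟩ := ht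
      have htn : t * Complex.normSq d < 2 * d.re :=
        (lt_div_iff₀ (Complex.normSq_pos.mpr hd0)).mp ht1'
      rw [mem_ball_zero_iff]
      have hnsq : Complex.normSq (1 - (t:ℂ)*d) < 1 := by
        have hexp : Complex.normSq (1 - (t:ℂ)*d) =
            1 - 2*t*d.re + t^2 * Complex.normSq d := by
          simp only [Complex.normSq_apply, Complex.sub_re, Complex.sub_im, Complex.mul_re,
            Complex.mul_im, Complex.one_re, Complex.one_im, Complex.ofReal_re, Complex.ofReal_im]
          ring
        have hnsd : 0 < Complex.normSq d := Complex.normSq_pos.mpr hd0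
        rw [hexp]
        nlinarith
      have h2 : ‖(1:ℂ) - (t:ℂ)*d‖^2 < 1 := by
        rw [Complex.sq_norm]; exact hnsq
      nlinarith [norm_nonneg ((1:ℂ) - (t:ℂ)*d)]
  -- nonnegativity from membership
  have hnonneg : ∀ d : ℂ, 0 < d.re → 0 ≤ (d * deriv f 1).re := by
    intro d hd
    obtain ⟨htend, hmem⟩ := main d hd
    refine ge_of_tendsto htend ?_
    filter_upwards [hmem, self_mem_nhdsWithin] with t hmemt ht
    have hfm := hmaps hmemt
    rw [mem_ball_zero_iff] at hfm
    have : Complex.normSq (f (1 - (t:ℂ)*d)) < 1 := by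
      rw [← Complex.sq_norm]
      nlinarith [norm_nonneg (f (1 - (t:ℂ)*d))]
    have ht' : (0:ℝ) < t := ht
    exact le_of_lt (div_pos (by linarith) (by linarith))
  -- radial direction with Schwarz lemma gives the stronger bound
  have hsch : ∀ z ∈ ball (0:ℂ) 1, ‖f z‖ ≤ ‖z‖ := fun z hz =>
    Complex.norm_le_norm_of_mapsTo_ball (hf.mono subset_union_left) (hmaps.mono_right ball_subset_closedBall) h0
      (by simpa using mem_ball_zero_iff.mp hz)
  have hradial : 1 ≤ (deriv f 1).re := by
    obtain ⟨htend1, hmem1⟩ := main 1 (by norm_num)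
    have hlow : Tendsto (fun t : ℝ => 1 - t/2) (𝓝[>] (0:ℝ)) (𝓝 (1:ℝ)) := by
      have : Tendsto (fun t : ℝ => 1 - t/2) (𝓝 (0:ℝ)) (𝓝 (1 - 0/2)) :=
        tendsto_const_nhds.sub (tendsto_id.div_const 2)
      simpa using this.mono_left nhdsWithin_le_nhds
    have hle : ∀ᶠ t : ℝ in 𝓝[>] (0:ℝ),
        1 - t/2 ≤ (1 - Complex.normSq (f (1 - (t:ℂ)*1))) / (2*t) := by
      filter_upwards [hmem1, Ioo_mem_nhdsGT (zero_lt_one' ℝ)] with t hmemt ht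
      obtain ⟨ht0', ht1'⟩ := ht
      have habs := hsch _ hmemt
      have habsz : ‖(1:ℂ) - (t:ℂ)*1‖ = 1 - t := by
        rw [mul_one, show (1:ℂ) - (t:ℂ) = ((1 - t : ℝ) : ℂ) by push_cast; ring,
          Complex.norm_real, Real.norm_eq_abs, _root_.abs_of_nonneg (by linarith)]
      rw [habsz] at habs
      have hnsq : Complex.normSq (f (1 - (t:ℂ)*1)) ≤ (1 - t)^2 := by
        rw [← Complex.sq_norm]
        have h0' : (0:ℝ) ≤ ‖f (1 - (t:ℂ)*1)‖ := norm_nonneg _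
        nlinarith
      rw [le_div_iff₀ (by linarith : (0:ℝ) < 2*t)]
      nlinarith
    have := le_of_tendsto_of_tendsto hlow htend1 hle
    simpa using this
  refine ⟨?_, hradial⟩
  -- imaginary part vanishes
  have hb : ∀ s : ℝ, 0 ≤ (deriv f 1).re - s * (deriv f 1).im := by
    intro s
    have hd : (0:ℝ) < ((1 : ℂ) + (s:ℂ)*I).re := by simp
    have := hnonneg ((1:ℂ) + (s:ℂ)*I) hd
    have hcalc : (((1:ℂ) + (s:ℂ)*I) * deriv f 1).re
        = (deriv f 1).re - s * (deriv f 1).im := by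
      simp [Complex.add_re, Complex.mul_re, Complex.add_im, Complex.mul_im]
    linarith [hcalc ▸ this]
  by_contra hbne
  rcases lt_or_gt_of_ne (fun h => hbne h) with hneg | hpos
  · have := hb (((deriv f 1).re + 1)/(deriv f 1).im)
    rw [div_mul_cancel₀ _ (ne_of_lt hneg)] at this
    linarith
  · have := hb (((deriv f 1).re + 1)/(deriv f 1).im)
    rw [div_mul_cancel₀ _ (ne_of_gt hpos)] at this
    linarith
end

section
/- Let 0 < r < 1 and let Φ be a holomorphic map of the unit disk into the exterior region {w ∈ ℂ : |w| > r}, extending differentiably to a boundary point p with |p| = 1 and Φ(p) = r·p. Then Φ'(p) is real and satisfies Φ'(p) ≤ -r·(|Φ(0)| - r)/(|Φ(0)| + r) < 0. -/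
open Complex Metric

open Filter Topology Set

lemma mobius_id (a w : ℂ) : ‖1 - (starRingEnd ℂ) a * w‖^2 - ‖a - w‖^2
    = (1 - ‖a‖^2) * (1 - ‖w‖^2) := by
  simp only [Complex.sq_norm, Complex.normSq_apply, Complex.sub_re,
    Complex.sub_im, Complex.mul_re, Complex.mul_im, Complex.one_re, Complex.one_im,
    Complex.conj_re, Complex.conj_im]
  ring

lemma schwarz_pick_zero {g : ℂ → ℂ} (hd : DifferentiableOn ℂ g (ball 0 1))
    (hm : ∀ z ∈ ball (0:ℂ) 1, ‖g z‖ < 1) {z : ℂ} (hz : z ∈ ball (0:ℂ) 1) :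
    ‖g z‖ * (1 + ‖g 0‖ * ‖z‖) ≤ ‖g 0‖ + ‖z‖ := by
  set a := g 0 with ha_def
  have ha : ‖a‖ < 1 := hm 0 (mem_ball_self one_pos)
  set h : ℂ → ℂ := fun w => (a - g w) / (1 - (starRingEnd ℂ) a * g w) with hh
  have hden : ∀ w ∈ ball (0:ℂ) 1, 1 - (starRingEnd ℂ) a * g w ≠ 0 := by
    intro w hw hzero
    have h1 : ‖(starRingEnd ℂ) a * g w‖ < 1 := by
      rw [norm_mul, RCLike.norm_conj]
      calc ‖a‖ * ‖g w‖ ≤ ‖a‖ * 1 := by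
            exact mul_le_mul_of_nonneg_left (hm w hw).le (norm_nonneg _)
        _ < 1 := by simpa using ha
    have : (1:ℂ) = (starRingEnd ℂ) a * g w := by linear_combination hzero
    rw [← this] at h1; simp at h1
  have hnormlt : ∀ w ∈ ball (0:ℂ) 1, ‖h w‖ < 1 := by
    intro w hw
    have hgw := hm w hw
    have hkey := mobius_id a (g w)
    have hpos : 0 < (1 - ‖a‖^2) * (1 - ‖g w‖^2) :=
      mul_pos (by nlinarith [norm_nonneg a]) (by nlinarith [norm_nonneg (g w)])
    have hlt : ‖a - g w‖ < ‖1 - (starRingEnd ℂ) a * g w‖ := by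
      have := lt_of_pow_lt_pow_left₀ 2 (norm_nonneg (1 - (starRingEnd ℂ) a * g w)) (by nlinarith : ‖a - g w‖^2 < ‖1 - (starRingEnd ℂ) a * g w‖^2)
      exact this
    rw [hh]
    simp only [norm_div]
    rw [div_lt_one (lt_of_le_of_lt (norm_nonneg _) hlt)]
    exact hlt
  have hd' : DifferentiableOn ℂ h (ball 0 1) := by
    apply DifferentiableOn.div
    · exact (differentiableOn_const a).sub hd
    · exact (differentiableOn_const 1).sub ((differentiableOn_const _).mul hd)
    · exact hden
  have h0 : h 0 = 0 := by simp [hh, ha_def]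
  have hmaps : Set.MapsTo h (ball 0 1) (ball 0 1) := by
    intro w hw; rw [mem_ball_zero_iff]; exact hnormlt w hw
  have hsch : ‖h z‖ ≤ ‖z‖ := by
    have := dist_le_dist_of_mapsTo_ball hd' (by rw [h0]; exact hmaps.mono_right ball_subset_closedBall) hz
    simpa [dist_eq_norm, h0] using this
  have hden_pos : 0 < ‖1 - (starRingEnd ℂ) a * g z‖ := norm_pos_iff.2 (hden z hz)
  have hineq : ‖a - g z‖ ≤ ‖z‖ * ‖1 - (starRingEnd ℂ) a * g z‖ := by
    have : ‖h z‖ = ‖a - g z‖ / ‖1 - (starRingEnd ℂ) a * g z‖ := by rw [hh]; simp [norm_div]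
    rw [this, div_le_iff₀ hden_pos] at hsch
    linarith
  -- now pure algebra
  set x := ‖g z‖; set t := ‖z‖; set α := ‖a‖
  set m := ‖a - g z‖; set n := ‖1 - (starRingEnd ℂ) a * g z‖
  have hkey : n^2 - m^2 = (1 - α^2) * (1 - x^2) := mobius_id a (g z)
  have hm2 : m^2 ≤ t^2 * n^2 := by nlinarith [norm_nonneg (a - g z), norm_nonneg z]
  have hxa : x - α ≤ m := by
    have := norm_sub_norm_le (g z) a
    rw [norm_sub_rev (g z) a] at this
    linarith [this]
  have hx1 : x < 1 := hm z hz
  have ht1 : t < 1 := mem_ball_zero_iff.1 hz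
  have hx0 : 0 ≤ x := norm_nonneg _
  have ht0 : 0 ≤ t := norm_nonneg _
  have hα0 : 0 ≤ α := norm_nonneg _
  have hm0 : 0 ≤ m := norm_nonneg _
  rcases le_or_gt x α with hcase | hcase
  · nlinarith [mul_nonneg hα0 ht0]
  · have e1 : t^2*n^2 - t^2*m^2 = t^2*((1-α^2)*(1-x^2)) := by linear_combination t^2 * hkey
    have hm3 : m^2*(1-t^2) ≤ t^2*((1-α^2)*(1-x^2)) := by nlinarith [hm2, e1]
    have hm4 : (x-α)^2 ≤ m^2 := by nlinarith [hxa, hm0, hcase]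
    have hm5 : (x-α)^2*(1-t^2) ≤ t^2*((1-α^2)*(1-x^2)) :=
      le_trans (mul_le_mul_of_nonneg_right hm4 (by nlinarith : (0:ℝ) ≤ 1-t^2)) hm3
    have hQeq : ((1+t*α)*x-(α+t)) * ((1-t*α)*x-(α-t))
        = (x-α)^2*(1-t^2) - t^2*((1-α^2)*(1-x^2)) := by ring
    have hQ : ((1+t*α)*x-(α+t)) * ((1-t*α)*x-(α-t)) ≤ 0 := by rw [hQeq]; linarith
    by_contra hcon
    push_neg at hcon
    have hP1 : 0 < (1+t*α)*x-(α+t) := by linarith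
    have hP2b : 0 ≤ t*(1-α*x) := mul_nonneg ht0 (by nlinarith [hx1, hα0, hx0])
    have hsplit : ((1+t*α)*x-(α+t)) * ((1-t*α)*x-(α-t))
        = ((1+t*α)*x-(α+t)) * (x-α) + ((1+t*α)*x-(α+t)) * (t*(1-α*x)) := by ring
    rw [hsplit] at hQ
    linarith [mul_pos hP1 (show (0:ℝ) < x - α by linarith), mul_nonneg hP1.le hP2b]

/-- Boundary Schwarz-type lemma for maps into the exterior of the disk of radius `r`:
if `Φ` maps the unit disk holomorphically into `{w : |w| > r}`, has a derivative `d`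
at a boundary point `p` (|p| = 1) with `Φ p = r • p`, then `d` is real and
`d ≤ -r (|Φ(0)| - r)/(|Φ(0)| + r) < 0`. -/
theorem stmt_2 (r : ℝ) (hr0 : 0 < r) (hr1 : r < 1) (Φ : ℂ → ℂ) (p d : ℂ)
    (hΦ : DifferentiableOn ℂ Φ (ball (0 : ℂ) 1))
    (hmaps : Set.MapsTo Φ (ball (0 : ℂ) 1) {w : ℂ | r < ‖w‖})
    (hp : ‖p‖ = 1) (hΦp : Φ p = (r : ℂ) * p)
    (hderiv : HasDerivAt Φ d p) :
    d.im = 0 ∧ d.re ≤ -r * (‖Φ 0‖ - r) / (‖Φ 0‖ + r) ∧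
      -r * (‖Φ 0‖ - r) / (‖Φ 0‖ + r) < 0 := by
  have h0mem : (0:ℂ) ∈ ball (0:ℂ) 1 := mem_ball_self one_pos
  have hA : r < ‖Φ 0‖ := hmaps h0mem
  have hApos : (0:ℝ) < ‖Φ 0‖ := hr0.trans hA
  set α : ℝ := r / ‖Φ 0‖ with hα_def
  have hα0 : 0 < α := div_pos hr0 hApos
  have hα1 : α < 1 := (div_lt_one hApos).2 hA
  -- the auxiliary holomorphic map into the disk
  set g : ℂ → ℂ := fun z => (r:ℂ) / Φ z with hg_def
  have hΦne : ∀ z ∈ ball (0:ℂ) 1, Φ z ≠ 0 := by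
    intro z hz h; have := hmaps hz; rw [Set.mem_setOf_eq, h, norm_zero] at this; linarith
  have hg_diff : DifferentiableOn ℂ g (ball 0 1) :=
    (differentiableOn_const _).div hΦ hΦne
  have hg_lt : ∀ z ∈ ball (0:ℂ) 1, ‖g z‖ < 1 := by
    intro z hz
    rw [hg_def]; simp only [norm_div, Complex.norm_real, Real.norm_of_nonneg hr0.le]
    rw [div_lt_one (hr0.trans (hmaps hz))]
    exact hmaps hz
  have hg0 : ‖g 0‖ = α := by
    rw [hg_def]; simp only [norm_div, Complex.norm_real]
    rw [Real.norm_of_nonneg hr0.le]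
  -- pointwise lower bound on the real part
  have hPW : ∀ z ∈ ball (0:ℂ) 1,
      (1 - ‖z‖^2) / (1 + α * ‖z‖) ≤ ((Φ z - (r:ℂ) * z) / Φ z).re := by
    intro z hz
    have hSP : ‖g z‖ * (1 + ‖g 0‖ * ‖z‖) ≤ ‖g 0‖ + ‖z‖ := schwarz_pick_zero hg_diff hg_lt hz
    rw [hg0] at hSP
    have hrw : (Φ z - (r:ℂ) * z) / Φ z = 1 - z * g z := by
      rw [hg_def]; field_simp [hΦne z hz]
    rw [hrw]
    have hre : (1 - z * g z).re = 1 - (z * g z).re := by simp [Complex.sub_re]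
    rw [hre]
    have h1 : (z * g z).re ≤ ‖z‖ * ‖g z‖ := by
      calc (z * g z).re ≤ ‖z * g z‖ := Complex.re_le_norm _
        _ = ‖z‖ * ‖g z‖ := norm_mul _ _
    have hden : (0:ℝ) < 1 + α * ‖z‖ := by positivity
    rw [div_le_iff₀ hden]
    nlinarith [norm_nonneg z, hSP, mul_le_mul_of_nonneg_left hSP (norm_nonneg z)]
  have hp0 : p ≠ 0 := by intro h; rw [h, norm_zero] at hp; linarith
  have hrne : (r:ℂ) ≠ 0 := Complex.ofReal_ne_zero.2 hr0.ne'
  have main : ∀ c : ℝ, 2/(1+α) ≤ ((((r:ℂ) - d) * (1 - Complex.I * c)) / (r:ℂ)).re := by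
    intro c
    set u : ℝ → ℂ := fun t => (t:ℂ) * Complex.exp (Complex.I * c * (1 - (t:ℂ))) with hu_def
    set z : ℝ → ℂ := fun t => p * u t with hz_def
    have hu1 : u 1 = 1 := by rw [hu_def]; simp
    have hz1 : z 1 = p := by rw [hz_def]; simp [hu1]
    have hu_deriv : HasDerivAt u (1 - Complex.I * c) 1 := by
      have h1 : HasDerivAt (fun t:ℝ => (t:ℂ)) 1 1 := by
        simpa using (hasDerivAt_id (1:ℝ)).ofReal_comp
      have h2 : HasDerivAt (fun t:ℝ => Complex.I * c * (1 - (t:ℂ)))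
          (Complex.I * c * (0 - 1)) 1 :=
        ((hasDerivAt_const (1:ℝ) (1:ℂ)).sub h1).const_mul (Complex.I * c)
      have h3 := h1.mul h2.cexp
      rw [hu_def]
      convert h3 using 1
      · rfl
      · rfl
      simp
      ring
    have hznorm : ∀ t : ℝ, 0 ≤ t → ‖z t‖ = t := by
      intro t ht
      have hre : (Complex.I * (c:ℂ) * (1 - (t:ℂ))).re = 0 := by simp
      rw [hz_def]
      simp only [hu_def, norm_mul, hp, one_mul, Complex.norm_exp, hre,
        Real.exp_zero, mul_one, Complex.norm_real, Real.norm_eq_abs, _root_.abs_of_nonneg ht]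
    have hz_ball : ∀ t ∈ Set.Ioo (0:ℝ) 1, z t ∈ ball (0:ℂ) 1 := by
      intro t ht; rw [mem_ball_zero_iff, hznorm t ht.1.le]; exact ht.2
    have hz_ne : ∀ t ∈ Set.Ioo (0:ℝ) 1, z t ≠ p := by
      intro t ht h
      have := hznorm t ht.1.le
      rw [h, hp] at this; linarith [ht.2]
    have hIoo : Set.Ioo (0:ℝ) 1 ∈ 𝓝[<] (1:ℝ) :=
      Ioo_mem_nhdsLT_of_mem (by norm_num : (1:ℝ) ∈ Set.Ioc (0:ℝ) 1)
    have hmono : 𝓝[<] (1:ℝ) ≤ 𝓝[≠] (1:ℝ) :=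
      nhdsWithin_mono 1 (fun x hx => ne_of_lt hx)
    have hz_deriv : HasDerivAt z (p * (1 - Complex.I * c)) 1 := by
      rw [hz_def]; exact hu_deriv.const_mul p
    have T1 : Tendsto (fun t : ℝ => (1-t)⁻¹ • (z t - p)) (𝓝[<] (1:ℝ))
        (𝓝 (-(p * (1 - Complex.I * c)))) := by
      have hs := (hasDerivAt_iff_tendsto_slope.1 hz_deriv).mono_left hmono
      have := hs.neg
      apply this.congr
      intro t
      rw [slope_def_module, hz1, ← neg_smul, ← inv_neg, neg_sub]
    have T2z : Tendsto z (𝓝[<] (1:ℝ)) (𝓝[≠] p) := by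
      rw [tendsto_nhdsWithin_iff]
      constructor
      · have := hz_deriv.continuousAt.tendsto
        rw [hz1] at this
        exact this.mono_left nhdsWithin_le_nhds
      · exact eventually_of_mem hIoo (fun t ht => hz_ne t ht)
    have T2 : Tendsto (fun t : ℝ => slope Φ p (z t)) (𝓝[<] (1:ℝ)) (𝓝 d) :=
      (hasDerivAt_iff_tendsto_slope.1 hderiv).comp T2z
    have T3 : Tendsto (fun t : ℝ => (1-t)⁻¹ • (Φ (z t) - Φ p)) (𝓝[<] (1:ℝ))
        (𝓝 (d * -(p * (1 - Complex.I * c)))) := by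
      have := T2.mul T1
      apply this.congr'
      filter_upwards [hIoo] with t ht
      have hzp : z t - p ≠ 0 := sub_ne_zero.2 (hz_ne t ht)
      rw [slope_def_field, mul_smul_comm, div_mul_cancel₀ _ hzp]
    have T4 : Tendsto (fun t : ℝ => (1-t)⁻¹ • (Φ (z t) - (r:ℂ) * z t)) (𝓝[<] (1:ℝ))
        (𝓝 (((r:ℂ) - d) * (p * (1 - Complex.I * c)))) := by
      have hT1r := T1.const_smul ((r:ℂ))
      have := T3.sub hT1r
      have heq : d * -(p * (1 - Complex.I * c)) - (r:ℂ) • -(p * (1 - Complex.I * c))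
          = ((r:ℂ) - d) * (p * (1 - Complex.I * c)) := by
        rw [smul_eq_mul]; ring
      rw [heq] at this
      apply this.congr
      intro t
      rw [smul_comm, ← smul_sub]
      congr 1
      rw [hΦp, smul_eq_mul]
      ring
    have T5 : Tendsto (fun t : ℝ => Φ (z t)) (𝓝[<] (1:ℝ)) (𝓝 ((r:ℂ) * p)) := by
      have := hderiv.continuousAt.tendsto.comp (T2z.mono_right nhdsWithin_le_nhds)
      rwa [hΦp] at this
    have hrp : (r:ℂ) * p ≠ 0 := mul_ne_zero hrne hp0
    have T6 : Tendsto (fun t : ℝ => ((1-t)⁻¹ • (Φ (z t) - (r:ℂ) * z t)) / Φ (z t))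
        (𝓝[<] (1:ℝ)) (𝓝 ((((r:ℂ) - d) * (1 - Complex.I * c)) / (r:ℂ))) := by
      have := T4.div T5 hrp
      have heq : ((r:ℂ) - d) * (p * (1 - Complex.I * c)) / ((r:ℂ) * p)
          = (((r:ℂ) - d) * (1 - Complex.I * c)) / (r:ℂ) := by
        field_simp
      rwa [heq] at this
    have T7 : Tendsto (fun t : ℝ => (((1-t)⁻¹ • (Φ (z t) - (r:ℂ) * z t)) / Φ (z t)).re)
        (𝓝[<] (1:ℝ)) (𝓝 (((((r:ℂ) - d) * (1 - Complex.I * c)) / (r:ℂ)).re)) :=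
      (Complex.continuous_re.tendsto _).comp T6
    have TR : Tendsto (fun t : ℝ => (1+t)/(1+α*t)) (𝓝[<] (1:ℝ)) (𝓝 (2/(1+α))) := by
      have h1 : Tendsto (fun t : ℝ => (1+t)/(1+α*t)) (𝓝 (1:ℝ)) (𝓝 ((1+1)/(1+α*1))) := by
        apply Tendsto.div
        · exact tendsto_const_nhds.add tendsto_id
        · exact tendsto_const_nhds.add (tendsto_id.const_mul α)
        · positivity
      have : (1+1 : ℝ)/(1+α*1) = 2/(1+α) := by norm_num
      rw [this] at h1
      exact h1.mono_left nhdsWithin_le_nhds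
    have LB : ∀ᶠ t in 𝓝[<] (1:ℝ),
        (1+t)/(1+α*t) ≤ (((1-t)⁻¹ • (Φ (z t) - (r:ℂ) * z t)) / Φ (z t)).re := by
      filter_upwards [hIoo] with t ht
      have hb := hz_ball t ht
      have hn := hznorm t ht.1.le
      have h1t : (0:ℝ) < 1 - t := by linarith [ht.2]
      have hPW' := hPW (z t) hb
      rw [hn] at hPW'
      have hrw : ((1-t)⁻¹ • (Φ (z t) - (r:ℂ) * z t)) / Φ (z t)
          = (1-t)⁻¹ • ((Φ (z t) - (r:ℂ) * z t) / Φ (z t)) := smul_div_assoc _ _ _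
      rw [hrw, Complex.real_smul, Complex.re_ofReal_mul]
      have hden : (0:ℝ) < 1 + α * t := by nlinarith [ht.1, ht.2]
      have key : (1+t)/(1+α*t) = (1-t)⁻¹ * ((1 - t^2) / (1 + α * t)) := by
        field_simp
        ring
      rw [key]
      apply mul_le_mul_of_nonneg_left hPW' (by positivity)
    exact le_of_tendsto_of_tendsto TR T7 LB
  -- compute the real part
  have hre : ∀ c : ℝ, ((((r:ℂ) - d) * (1 - Complex.I * c)) / (r:ℂ)).re
      = ((r - d.re) - c * d.im)/r := by
    intro c
    rw [Complex.div_ofReal_re]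
    congr 1
    simp only [Complex.mul_re, Complex.sub_re, Complex.sub_im, Complex.mul_im,
      Complex.ofReal_re, Complex.ofReal_im, Complex.one_re, Complex.one_im,
      Complex.I_re, Complex.I_im]
    ring
  have h2 : ∀ c : ℝ, 2/(1+α)*r ≤ (r - d.re) - c * d.im := by
    intro c
    have h := main c
    rw [hre c] at h
    exact (le_div_iff₀ hr0).1 h
  have him : d.im = 0 := by
    by_contra him
    have h3 := h2 (((r - d.re) - 2/(1+α)*r + 1)/d.im)
    rw [div_mul_cancel₀ _ him] at h3
    linarith
  have hd_re : d.re ≤ r - 2/(1+α)*r := by have := h2 0; linarith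
  have hA0 : ‖Φ 0‖ ≠ 0 := hApos.ne'
  have hAr : ‖Φ 0‖ + r ≠ 0 := by positivity
  have hstep : 2/(1+α) = 2*‖Φ 0‖/(‖Φ 0‖ + r) := by
    rw [hα_def, one_add_div hA0, div_div_eq_mul_div]
  have heq : r - 2/(1+α)*r = -r * (‖Φ 0‖ - r) / (‖Φ 0‖ + r) := by
    rw [hstep]
    field_simp
    ring
  refine ⟨him, ?_, ?_⟩
  · linarith [heq ▸ hd_re]
  · apply div_neg_of_neg_of_pos
    · nlinarith
    · linarith
end

section
/- Let μ ∈ (0,1) and let f be a holomorphic function on the open unit disk such that |f'(z)| ≤ M(1-|z|)^{μ-1} for all z in the disk. Then for all z, w in the disk, |f(z) - f(w)| ≤ N|z - w|^μ, where N is a constant depending only on M and μ. -/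
open Complex Metric

private lemma hl_subadd {μ : ℝ} (hμ0 : 0 < μ) (hμ1 : μ < 1) {x y : ℝ} (hx : 0 ≤ x) (hy : 0 ≤ y) :
    (x + y) ^ μ ≤ x ^ μ + y ^ μ := by
  have := NNReal.rpow_add_le_add_rpow (⟨x, hx⟩ : NNReal) ⟨y, hy⟩ hμ0.le hμ1.le
  exact_mod_cast this

/-- Radial estimate: `‖f z - f (t z)‖ ≤ (M/μ) (1-t)^μ`. -/
private lemma hl_radial (M μ : ℝ) (hM : 0 < M) (hμ0 : 0 < μ) (hμ1 : μ < 1)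
    (f : ℂ → ℂ) (hd : DifferentiableOn ℂ f (ball (0 : ℂ) 1))
    (hb : ∀ z ∈ ball (0 : ℂ) 1, ‖deriv f z‖ ≤ M * (1 - ‖z‖) ^ (μ - 1))
    (z : ℂ) (hz : z ∈ ball (0 : ℂ) 1) (t : ℝ) (ht0 : 0 ≤ t) (ht1 : t ≤ 1) :
    ‖f z - f ((t : ℂ) * z)‖ ≤ M / μ * (1 - t) ^ μ := by
  set a : ℝ := ‖z‖ with ha_def
  have ha0 : 0 ≤ a := norm_nonneg z
  have ha1 : a < 1 := mem_ball_zero_iff.mp hz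
  have hpos : ∀ s ∈ Set.Icc t 1, 0 < 1 - s * a := by
    intro s hs
    rcases hs with ⟨hs0, hs1⟩
    nlinarith
  have hmem : ∀ s ∈ Set.Icc t 1, (s : ℂ) * z ∈ ball (0 : ℂ) 1 := by
    intro s hs
    rcases hs with ⟨hs0, hs1⟩
    have h0s : 0 ≤ s := le_trans ht0 hs0
    rw [mem_ball_zero_iff, norm_mul, Complex.norm_real, Real.norm_eq_abs, _root_.abs_of_nonneg h0s]
    nlinarith
  -- the function along the ray
  set g : ℝ → ℂ := fun s => f ((s : ℂ) * z) - f ((t : ℂ) * z) with hg_def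
  set g' : ℝ → ℂ := fun s => deriv f ((s : ℂ) * z) * z with hg'_def
  have hg : ∀ s ∈ Set.Icc t 1, HasDerivAt g (g' s) s := by
    intro s hs
    have hdf : DifferentiableAt ℂ f ((s : ℂ) * z) :=
      hd.differentiableAt (isOpen_ball.mem_nhds (hmem s hs))
    have h1 : HasDerivAt (fun w : ℂ => w * z) z (s : ℂ) := by
      simpa using (hasDerivAt_id ((s : ℂ))).mul_const z
    have h2 : HasDerivAt (fun w : ℂ => f (w * z)) (deriv f ((s : ℂ) * z) * z) (s : ℂ) :=
      (hdf.hasDerivAt).comp (s : ℂ) h1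
    exact (h2.comp_ofReal).sub_const _
  -- the barrier function
  set B : ℝ → ℝ := fun s => M / μ * ((1 - t * a) ^ μ - (1 - s * a) ^ μ) with hB_def
  set B' : ℝ → ℝ := fun s => M * a * (1 - s * a) ^ (μ - 1) with hB'_def
  have hB : ∀ s ∈ Set.Icc t 1, HasDerivAt B (B' s) s := by
    intro s hs
    have hne : (1 - s * a) ≠ 0 := (hpos s hs).ne'
    have hu : HasDerivAt (fun s : ℝ => 1 - s * a) (-a) s := by
      simpa using ((hasDerivAt_id s).mul_const a).const_sub 1
    have hv : HasDerivAt (fun s : ℝ => (1 - s * a) ^ μ)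
        (μ * (1 - s * a) ^ (μ - 1) * (-a)) s :=
      by have := (Real.hasDerivAt_rpow_const (x := 1 - s * a) (p := μ) (Or.inl hne)).comp s hu; exact this
    have := (hv.const_sub ((1 - t * a) ^ μ)).const_mul (M / μ)
    convert this using 1
    · rfl
    · rfl
    simp only [hB'_def]; field_simp
  have bound : ∀ s ∈ Set.Ico t 1, ‖g' s‖ ≤ B' s := by
    intro s hs
    have hs' : s ∈ Set.Icc t 1 := Set.Ico_subset_Icc_self hs
    have h0s : 0 ≤ s := le_trans ht0 hs'.1
    have hnorm : ‖(s : ℂ) * z‖ = s * a := by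
      rw [norm_mul, Complex.norm_real, Real.norm_eq_abs, _root_.abs_of_nonneg h0s]
    have := hb _ (hmem s hs')
    rw [hnorm] at this
    calc ‖g' s‖ = ‖deriv f ((s : ℂ) * z)‖ * a := by rw [hg'_def, norm_mul]
      _ ≤ M * (1 - s * a) ^ (μ - 1) * a := by
          exact mul_le_mul_of_nonneg_right this ha0
      _ = B' s := by rw [hB'_def]; ring
  have hgc : ContinuousOn g (Set.Icc t 1) := fun s hs => (hg s hs).continuousAt.continuousWithinAt
  have hBc : ContinuousOn B (Set.Icc t 1) := fun s hs => (hB s hs).continuousAt.continuousWithinAt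
  have hga : ‖g t‖ ≤ B t := by simp [hg_def, hB_def]
  have key := image_norm_le_of_norm_deriv_right_le_deriv_boundary' hgc
    (fun s hs => (hg s (Set.Ico_subset_Icc_self hs)).hasDerivWithinAt) hga hBc
    (fun s hs => (hB s (Set.Ico_subset_Icc_self hs)).hasDerivWithinAt) bound
    (Set.right_mem_Icc.mpr ht1)
  have hg1 : g 1 = f z - f ((t : ℂ) * z) := by simp [hg_def]
  rw [hg1] at key
  refine key.trans ?_
  -- now show B 1 ≤ M/μ * (1-t)^μ
  have h1 : (1 - t * a) ^ μ ≤ (1 - a) ^ μ + (1 - t) ^ μ := by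
    have heq : 1 - t * a = (1 - a) + a * (1 - t) := by ring
    have h2 : ((1 - a) + a * (1 - t)) ^ μ ≤ (1 - a) ^ μ + (a * (1 - t)) ^ μ :=
      hl_subadd hμ0 hμ1 (by linarith) (by nlinarith)
    have h3 : (a * (1 - t)) ^ μ ≤ (1 - t) ^ μ :=
      Real.rpow_le_rpow (by nlinarith) (by nlinarith) hμ0.le
    rw [heq]
    linarith
  have hMμ : 0 ≤ M / μ := div_nonneg hM.le hμ0.le
  have h1a : 0 ≤ (1 - a) ^ μ := Real.rpow_nonneg (by linarith) μ
  have : B 1 = M / μ * ((1 - t * a) ^ μ - (1 - a) ^ μ) := by simp [hB_def]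
  rw [this]
  apply mul_le_mul_of_nonneg_left _ hMμ
  linarith

/-- Hardy–Littlewood theorem: if `f` is holomorphic on the unit disk with
`|f'(z)| ≤ M (1 - |z|)^(μ-1)`, `0 < μ < 1`, then `f` is uniformly `μ`-Hölder
on the disk with a constant depending only on `M` and `μ`. -/
theorem stmt_4 (M μ : ℝ) (hM : 0 < M) (hμ : μ ∈ Set.Ioo (0 : ℝ) 1) :
    ∃ N : ℝ, ∀ f : ℂ → ℂ, DifferentiableOn ℂ f (ball (0 : ℂ) 1) →
      (∀ z ∈ ball (0 : ℂ) 1, ‖deriv f z‖ ≤ M * (1 - ‖z‖) ^ (μ - 1)) →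
      ∀ z ∈ ball (0 : ℂ) 1, ∀ w ∈ ball (0 : ℂ) 1,
        ‖f z - f w‖ ≤ N * ‖z - w‖ ^ μ := by
  obtain ⟨hμ0, hμ1⟩ := hμ
  refine ⟨2 * (M / μ) + M, ?_⟩
  intro f hd hb z hz w hw
  set N : ℝ := 2 * (M / μ) + M with hN_def
  have hMμ : 0 ≤ M / μ := div_nonneg hM.le hμ0.le
  set δ : ℝ := ‖z - w‖ with hδ_def
  clear_value δ
  have hδ0 : 0 ≤ δ := by rw [hδ_def]; exact norm_nonneg _
  rcases eq_or_lt_of_le hδ0 with hδz | hδpos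
  · -- z = w
    have : z = w := by
      have : ‖z - w‖ = 0 := by rw [← hδ_def]; exact hδz.symm
      rwa [norm_eq_zero, sub_eq_zero] at this
    simp only [this, sub_self, norm_zero]
    positivity
  rcases le_or_gt 1 δ with hδ1 | hδ1
  · -- δ ≥ 1 : use the bound via f 0
    have h0z := hl_radial M μ hM hμ0 hμ1 f hd hb z hz 0 le_rfl zero_le_one
    have h0w := hl_radial M μ hM hμ0 hμ1 f hd hb w hw 0 le_rfl zero_le_one
    simp only [Complex.ofReal_zero, zero_mul, sub_zero, Real.one_rpow] at h0z h0w
    have htri : ‖f z - f w‖ ≤ ‖f z - f 0‖ + ‖f 0 - f w‖ := by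
      simpa using norm_sub_le_norm_sub_add_norm_sub (f z) (f 0) (f w)
    have hδμ : 1 ≤ δ ^ μ := Real.one_le_rpow hδ1 hμ0.le
    have hN0 : 0 ≤ N := by positivity
    calc ‖f z - f w‖ ≤ ‖f z - f 0‖ + ‖f 0 - f w‖ := htri
      _ ≤ M / μ * 1 + M / μ * 1 := by
          refine add_le_add h0z ?_
          calc ‖f 0 - f w‖ = ‖f w - f 0‖ := norm_sub_rev _ _
            _ ≤ M / μ * 1 := h0w
      _ ≤ N * 1 := by rw [hN_def]; nlinarith
      _ ≤ N * δ ^ μ := by nlinarith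
  · -- 0 < δ < 1
    set t : ℝ := 1 - δ with ht_def
    clear_value t
    have ht0 : 0 ≤ t := by linarith
    have ht1 : t ≤ 1 := by linarith
    have htz := hl_radial M μ hM hμ0 hμ1 f hd hb z hz t ht0 ht1
    have htw := hl_radial M μ hM hμ0 hμ1 f hd hb w hw t ht0 ht1
    have h1mt : (1 : ℝ) - t = δ := by rw [ht_def]; ring
    rw [h1mt] at htz htw
    -- middle estimate on the shrunk disk
    set r : ℝ := t * max ‖z‖ ‖w‖ with hr_def
    have hz1 : ‖z‖ < 1 := mem_ball_zero_iff.mp hz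
    have hw1 : ‖w‖ < 1 := mem_ball_zero_iff.mp hw
    have hmax1 : max ‖z‖ ‖w‖ < 1 := max_lt hz1 hw1
    have hmax0 : 0 ≤ max ‖z‖ ‖w‖ := le_max_of_le_left (norm_nonneg z)
    have hrt : r ≤ t := by nlinarith
    have hmid : ‖f ((t : ℂ) * z) - f ((t : ℂ) * w)‖ ≤
        M * δ ^ (μ - 1) * ‖(t : ℂ) * z - (t : ℂ) * w‖ := by
      have hsub : closedBall (0 : ℂ) r ⊆ ball (0 : ℂ) 1 := by
        apply closedBall_subset_ball
        linarith
      have hzr : (t : ℂ) * z ∈ closedBall (0 : ℂ) r := by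
        rw [mem_closedBall_zero_iff, norm_mul, Complex.norm_real, Real.norm_eq_abs,
          _root_.abs_of_nonneg ht0]
        have : ‖z‖ ≤ max ‖z‖ ‖w‖ := le_max_left _ _
        nlinarith
      have hwr : (t : ℂ) * w ∈ closedBall (0 : ℂ) r := by
        rw [mem_closedBall_zero_iff, norm_mul, Complex.norm_real, Real.norm_eq_abs,
          _root_.abs_of_nonneg ht0]
        have : ‖w‖ ≤ max ‖z‖ ‖w‖ := le_max_right _ _
        nlinarith
      refine (convex_closedBall (0 : ℂ) r).norm_image_sub_le_of_norm_deriv_le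
        (fun x hx => hd.differentiableAt (isOpen_ball.mem_nhds (hsub hx))) ?_
        hwr hzr
      intro x hx
      have hx1 : ‖x‖ ≤ r := mem_closedBall_zero_iff.mp hx
      have hxb : x ∈ ball (0 : ℂ) 1 := hsub hx
      refine (hb x hxb).trans ?_
      have hδle : δ ≤ 1 - ‖x‖ := by
        have : 1 - t = δ := h1mt
        nlinarith
      have := Real.rpow_le_rpow_of_nonpos hδpos hδle (by linarith : μ - 1 ≤ 0)
      nlinarith [Real.rpow_nonneg hδ0 (μ - 1)]
    have hnormt : ‖(t : ℂ) * z - (t : ℂ) * w‖ = t * δ := by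
      rw [← mul_sub, norm_mul, Complex.norm_real, Real.norm_eq_abs, _root_.abs_of_nonneg ht0,
        ← hδ_def]
    rw [hnormt] at hmid
    have hpow : δ ^ (μ - 1) * δ = δ ^ μ := by
      rw [← Real.rpow_add_one hδpos.ne' (μ - 1)]
      ring_nf
    have htri : ‖f z - f w‖ ≤ ‖f z - f ((t : ℂ) * z)‖ + ‖f ((t : ℂ) * z) - f ((t : ℂ) * w)‖
        + ‖f ((t : ℂ) * w) - f w‖ := by
      have h1 := norm_sub_le_norm_sub_add_norm_sub (f z) (f ((t : ℂ) * z)) (f w)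
      have h2 := norm_sub_le_norm_sub_add_norm_sub (f ((t : ℂ) * z)) (f ((t : ℂ) * w)) (f w)
      linarith
    have htw' : ‖f ((t : ℂ) * w) - f w‖ ≤ M / μ * δ ^ μ := by
      rw [norm_sub_rev]; exact htw
    have hmid' : M * δ ^ (μ - 1) * (t * δ) ≤ M * δ ^ μ := by
      have : M * δ ^ (μ - 1) * (t * δ) = M * t * (δ ^ (μ - 1) * δ) := by ring
      rw [this, hpow]
      have hδμ0 : 0 ≤ δ ^ μ := Real.rpow_nonneg hδ0 μ
      nlinarith [mul_nonneg (mul_nonneg hM.le hδμ0) (sub_nonneg.mpr ht1)]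
    calc ‖f z - f w‖ ≤ M / μ * δ ^ μ + M * δ ^ (μ - 1) * (t * δ) + M / μ * δ ^ μ := by
          linarith
      _ ≤ M / μ * δ ^ μ + M * δ ^ μ + M / μ * δ ^ μ := by linarith
      _ = N * δ ^ μ := by rw [hN_def]; ring
end

section
/- Let μ ∈ (0,1), let f : 𝔻 → ℂ be holomorphic with |f(z)| ≤ C on 𝔻, and suppose f is continuous on the closed disk with boundary values satisfying |f(e^{it}) - f(e^{is})| ≤ A|t - s|^μ for all real s, t. Then f'(ζ) satisfies |f'(ζ)| ≤ N(1 - |ζ|)^{μ-1} for all ζ ∈ 𝔻, where N depends only on A, C, μ. -/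
open Complex Metric
open Real Set intervalIntegral MeasureTheory


lemma half_le_sin {u : ℝ} (h0 : 0 ≤ u) (h2 : u ≤ π / 2) : u / 2 ≤ Real.sin u := by
  have h := Real.mul_le_sin h0 h2
  have hπpos := Real.pi_pos
  have h24 : 2/4 ≤ 2/π := div_le_div_of_nonneg_left (by norm_num) hπpos (by linarith [Real.pi_le_four])
  nlinarith [mul_le_mul_of_nonneg_right h24 h0]

lemma denom_bound (r R θ : ℝ) (hr0 : 0 ≤ r) (hrR : r < R) (hR1 : R ≤ 1)
    (hR2 : 1 ≤ 2 * R) (hθ0 : 0 ≤ θ) (hθ2 : θ ≤ 2 * π) :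
    R - r + min θ (2 * π - θ) ≤ 32 * ‖(R : ℂ) * Complex.exp (θ * I) - (r : ℂ)‖ := by
  set z : ℂ := (R : ℂ) * Complex.exp (θ * I) - (r : ℂ) with hz
  set m : ℝ := min θ (2 * π - θ) with hm
  have hπ4 : π ≤ 4 := Real.pi_le_four
  have hπpos := Real.pi_pos
  have hmπ : m ≤ π := by
    have h1 : m ≤ θ := min_le_left _ _
    have h2 : m ≤ 2 * π - θ := min_le_right _ _
    linarith
  have hm0 : 0 ≤ m := le_min hθ0 (by linarith)
  have hre : z.re = R * Real.cos θ - r := by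
    simp [hz, Complex.sub_re, Complex.mul_re, Complex.ofReal_re, Complex.ofReal_im,
      Complex.exp_ofReal_mul_I_re, Complex.exp_ofReal_mul_I_im]
  have him : z.im = R * Real.sin θ := by
    simp [hz, Complex.sub_im, Complex.mul_im, Complex.ofReal_re, Complex.ofReal_im,
      Complex.exp_ofReal_mul_I_re, Complex.exp_ofReal_mul_I_im]
  have h1 : |z.re| ≤ ‖z‖ := Complex.abs_re_le_norm z
  have h2 : |z.im| ≤ ‖z‖ := Complex.abs_im_le_norm z
  have h3 : R - r ≤ ‖z‖ := by
    have h := norm_sub_norm_le ((R : ℂ) * Complex.exp (θ * I)) (r : ℂ)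
    have hR' : ‖(R : ℂ) * Complex.exp (θ * I)‖ = R := by
      rw [norm_mul, Complex.norm_real, Complex.norm_exp_ofReal_mul_I,
        mul_one, Real.norm_eq_abs, _root_.abs_of_nonneg (by linarith)]
    have hr' : ‖(r : ℂ)‖ = r := by
      rw [Complex.norm_real, Real.norm_eq_abs, _root_.abs_of_nonneg hr0]
    rwa [hR', hr'] at h
  rcases le_or_gt (Real.cos θ) 0 with hc | hc
  · -- cos θ ≤ 0 : ‖z‖ ≥ 1/4
    have habs : 1 ≤ |Real.cos θ| + |Real.sin θ| := by
      nlinarith [Real.sin_sq_add_cos_sq θ, abs_nonneg (Real.cos θ), abs_nonneg (Real.sin θ),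
        _root_.sq_abs (Real.cos θ), _root_.sq_abs (Real.sin θ)]
    have hre' : |z.re| = r + R * |Real.cos θ| := by
      rw [hre, _root_.abs_of_nonpos (by nlinarith), _root_.abs_of_nonpos hc]; ring
    have him' : |z.im| = R * |Real.sin θ| := by
      rw [him, abs_mul, _root_.abs_of_nonneg (by linarith : (0:ℝ) ≤ R)]
    have hz4 : 1 / 4 ≤ ‖z‖ := by nlinarith [abs_nonneg (Real.sin θ), abs_nonneg (Real.cos θ)]
    nlinarith
  · -- cos θ > 0
    have hsin : m / 4 ≤ R * |Real.sin θ| := by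
      rcases le_or_gt θ π with hθπ | hθπ
      · have hθhalf : θ ≤ π / 2 := by
          by_contra hcon; push_neg at hcon
          have := Real.cos_nonpos_of_pi_div_two_le_of_le (le_of_lt hcon) (by linarith)
          linarith
        have hs2 : θ / 2 ≤ Real.sin θ := half_le_sin hθ0 hθhalf
        have hsa : |Real.sin θ| = Real.sin θ :=
          _root_.abs_of_nonneg (Real.sin_nonneg_of_nonneg_of_le_pi hθ0 hθπ)
        have hmθ : m ≤ θ := min_le_left _ _
        rw [hsa]
        nlinarith [mul_le_mul_of_nonneg_right (by linarith : (1:ℝ)/2 ≤ R)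
          (show 0 ≤ Real.sin θ by linarith)]
      · have hm' : m = 2 * π - θ := min_eq_right (by linarith)
        have hθ' : 2 * π - θ ≤ π / 2 := by
          by_contra hcon; push_neg at hcon
          have := Real.cos_nonpos_of_pi_div_two_le_of_le (by linarith : π/2 ≤ θ)
            (by linarith : θ ≤ π + π/2)
          linarith
        have hs0 : 0 ≤ 2 * π - θ := by linarith
        have hs2 : (2 * π - θ) / 2 ≤ Real.sin (2 * π - θ) := half_le_sin hs0 hθ'
        have habs' : Real.sin (2 * π - θ) ≤ |Real.sin θ| := by
          rw [show 2 * π - θ = -(θ - 2*π) by ring, Real.sin_neg, Real.sin_sub_two_pi]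
          exact neg_le_abs _
        rw [hm']
        nlinarith [mul_le_mul_of_nonneg_right (by linarith : (1:ℝ)/2 ≤ R)
          (show 0 ≤ |Real.sin θ| from abs_nonneg _)]
    have h4 : m / 4 ≤ ‖z‖ := by
      calc m / 4 ≤ R * |Real.sin θ| := hsin
        _ = |z.im| := by rw [him, abs_mul, _root_.abs_of_nonneg (by linarith : (0:ℝ) ≤ R)]
        _ ≤ ‖z‖ := h2
    linarith

lemma holder_circle {A μ : ℝ} (f : ℂ → ℂ)
    (hd : DifferentiableOn ℂ f (ball (0:ℂ) 1))
    (hc : ContinuousOn f (closedBall (0:ℂ) 1))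
    (hh : ∀ s t : ℝ, ‖f (Complex.exp (I * t)) - f (Complex.exp (I * s))‖ ≤ A * |t - s| ^ μ)
    (h : ℝ) : ∀ z ∈ closedBall (0:ℂ) 1, ‖f (Complex.exp (I * h) * z) - f z‖ ≤ A * |h| ^ μ := by
  intro z hzmem
  set e : ℂ := Complex.exp (I * h) with he
  have hnorm_e : ‖e‖ = 1 := by
    rw [he, mul_comm, Complex.norm_exp_ofReal_mul_I]
  have hmaps : MapsTo (fun z : ℂ => e * z) (ball (0:ℂ) 1) (ball (0:ℂ) 1) := by
    intro w hw
    rw [mem_ball_zero_iff] at hw ⊢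
    rw [norm_mul, hnorm_e, one_mul]; exact hw
  have hmaps' : MapsTo (fun z : ℂ => e * z) (closedBall (0:ℂ) 1) (closedBall (0:ℂ) 1) := by
    intro w hw
    rw [mem_closedBall_zero_iff] at hw ⊢
    rw [norm_mul, hnorm_e, one_mul]; exact hw
  have hdmul : DifferentiableOn ℂ (fun z : ℂ => e * z) (ball (0:ℂ) 1) :=
    (differentiable_id.const_mul e).differentiableOn
  have hF : DiffContOnCl ℂ (fun z => f (e * z) - f z) (ball (0:ℂ) 1) := by
    constructor
    · exact (hd.comp hdmul hmaps).sub hd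
    · rw [closure_ball (0:ℂ) one_ne_zero]
      exact (hc.comp ((continuous_const.mul continuous_id).continuousOn) hmaps').sub hc
  have hz_cl : z ∈ closure (ball (0:ℂ) 1) := by
    rwa [closure_ball (0:ℂ) one_ne_zero]
  refine Complex.norm_le_of_forall_mem_frontier_norm_le isBounded_ball hF ?_ hz_cl
  intro w hw
  rw [frontier_ball (0:ℂ) one_ne_zero, mem_sphere_zero_iff_norm] at hw
  have hw1 : ‖w‖ = 1 := hw
  have hwe : Complex.exp (I * (w.arg : ℂ)) = w := by
    have h0 := Complex.norm_mul_exp_arg_mul_I w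
    rw [hw1, Complex.ofReal_one, one_mul, mul_comm] at h0
    exact h0
  have key : e * w = Complex.exp (I * ((h + w.arg : ℝ) : ℂ)) := by
    conv_lhs => rw [← hwe]
    rw [he, ← Complex.exp_add]
    congr 1
    push_cast
    ring
  calc ‖f (e * w) - f w‖
      = ‖f (Complex.exp (I * ((h + w.arg : ℝ) : ℂ))) - f (Complex.exp (I * (w.arg : ℂ)))‖ := by
        rw [key, hwe]
    _ ≤ A * |(h + w.arg) - w.arg| ^ μ := hh w.arg (h + w.arg)
    _ = A * |h| ^ μ := by congr 2; ring

set_option maxHeartbeats 1600000 in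
lemma core {A μ : ℝ} (hA : 0 < A) (hμ0 : 0 < μ) (hμ1 : μ < 1) (f : ℂ → ℂ)
    (hd : DifferentiableOn ℂ f (ball (0:ℂ) 1))
    (hc : ContinuousOn f (closedBall (0:ℂ) 1))
    (hh : ∀ s t : ℝ, ‖f (Complex.exp (I * t)) - f (Complex.exp (I * s))‖ ≤ A * |t - s| ^ μ)
    (r : ℝ) (hr0 : 0 ≤ r) (hr1 : r < 1) :
    ‖deriv f (r : ℂ)‖ ≤ 4096 * A / (1 - μ) * (1 - r) ^ (μ - 1) := by
  set R : ℝ := (1 + r) / 2 with hRdef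
  set d : ℝ := (1 - r) / 2 with hddef
  have hrR : r < R := by rw [hRdef]; linarith
  have hR1 : R < 1 := by rw [hRdef]; linarith
  have hR0 : 0 < R := by rw [hRdef]; linarith
  have hd0 : 0 < d := by rw [hddef]; linarith
  have hR2 : 1 ≤ 2 * R := by rw [hRdef]; linarith
  have hdRr : R - r = d := by rw [hRdef, hddef]; ring
  have hπpos := Real.pi_pos
  have hsub : closedBall (0:ℂ) R ⊆ ball (0:ℂ) 1 := closedBall_subset_ball hR1
  have hrball : (r : ℂ) ∈ ball (0:ℂ) R := by
    rw [mem_ball_zero_iff, Complex.norm_real, Real.norm_eq_abs, _root_.abs_of_nonneg hr0]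
    exact hrR
  have hcau := Complex.two_pi_I_inv_smul_circleIntegral_sub_sq_inv_smul_of_differentiable
    isOpen_ball hsub hd hrball
  -- subtract the constant f R
  have h1 : ContinuousOn (fun z : ℂ => ((z - (r:ℂ)) ^ 2)⁻¹) (sphere (0:ℂ) R) := by
    refine ((continuous_id'.sub continuous_const).pow 2).continuousOn.inv₀ fun w hw h => ?_
    exact sphere_disjoint_ball.ne_of_mem hw hrball (sub_eq_zero.mp (sq_eq_zero_iff.mp h))
  have h2 : CircleIntegrable (fun z : ℂ => ((z - (r:ℂ)) ^ 2)⁻¹ • f z) 0 R := by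
    refine ContinuousOn.circleIntegrable hR0.le ?_
    exact h1.smul (hc.mono (sphere_subset_closedBall.trans (hsub.trans ball_subset_closedBall)))
  have h3 : CircleIntegrable (fun z : ℂ => ((z - (r:ℂ)) ^ 2)⁻¹ • f (R:ℂ)) 0 R :=
    ContinuousOn.circleIntegrable hR0.le (h1.smul continuousOn_const)
  have h4 : (∮ z : ℂ in C(0, R), ((z - (r:ℂ)) ^ 2)⁻¹) = 0 := by
    simpa using circleIntegral.integral_sub_zpow_of_ne (by decide : (-2 : ℤ) ≠ -1) 0 (r:ℂ) R
  have hsplit : (∮ z in C(0, R), ((z - (r:ℂ)) ^ 2)⁻¹ • (f z - f (R:ℂ)))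
      = ∮ z in C(0, R), ((z - (r:ℂ)) ^ 2)⁻¹ • f z := by
    simp only [smul_sub]
    rw [circleIntegral.integral_sub h2 h3]
    have : (∮ z in C(0, R), ((z - (r:ℂ)) ^ 2)⁻¹ • f (R:ℂ))
        = (∮ z in C(0, R), ((z - (r:ℂ)) ^ 2)⁻¹) • f (R:ℂ) :=
      circleIntegral.integral_smul_const _ _ _ _
    rw [this, h4, zero_smul, sub_zero]
  -- pointwise bound
  have hptwise : ∀ θ ∈ Set.uIoc (0:ℝ) (2*π), ‖deriv (circleMap 0 R) θ •
        ((circleMap 0 R θ - (r:ℂ)) ^ 2)⁻¹ • (f (circleMap 0 R θ) - f (R:ℂ))‖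
      ≤ 1024*A*((d+θ)^(μ-2) + (d+(2*π-θ))^(μ-2)) := by
    intro θ hθ
    rw [uIoc_of_le (by linarith : (0:ℝ) ≤ 2*π), mem_Ioc] at hθ
    obtain ⟨hθ0, hθ2⟩ := hθ
    set m : ℝ := min θ (2*π - θ) with hmdef
    have hm0 : 0 ≤ m := le_min hθ0.le (by linarith)
    have hcm : circleMap 0 R θ = (R:ℂ) * Complex.exp ((θ:ℂ) * I) := by simp [circleMap]
    have hD : d + m ≤ 32 * ‖circleMap 0 R θ - (r:ℂ)‖ := by
      have h := denom_bound r R θ hr0 hrR hR1.le hR2 hθ0.le hθ2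
      rw [hdRr] at h
      rw [hcm]
      exact h
    set D : ℝ := ‖circleMap 0 R θ - (r:ℂ)‖ with hDdef
    have hDpos : 0 < D := by
      have : 0 < 32 * D := by linarith
      linarith
    have hRmem : (R:ℂ) ∈ closedBall (0:ℂ) 1 := by
      rw [mem_closedBall_zero_iff, Complex.norm_real, Real.norm_eq_abs,
        _root_.abs_of_nonneg hR0.le]
      exact hR1.le
    have hNum : ‖f (circleMap 0 R θ) - f (R:ℂ)‖ ≤ A * m ^ μ := by
      rcases le_total θ (2*π - θ) with hcase | hcase
      · have hm' : m = θ := min_eq_left hcase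
        have h := holder_circle f hd hc hh θ (R:ℂ) hRmem
        rw [show Complex.exp (I * (θ:ℂ)) * (R:ℂ) = circleMap 0 R θ by
          rw [hcm, mul_comm I ((θ:ℂ)), mul_comm]] at h
        rw [hm']
        rwa [_root_.abs_of_nonneg hθ0.le] at h
      · have hm' : m = 2*π - θ := min_eq_right hcase
        have h := holder_circle f hd hc hh (θ - 2*π) (R:ℂ) hRmem
        have hexp : Complex.exp (I * ((θ - 2*π : ℝ) : ℂ)) = Complex.exp ((θ:ℂ) * I) := by
          have h1' : I * ((θ - 2*π : ℝ) : ℂ) = (θ:ℂ) * I - 2*(π:ℂ)*I := by push_cast; ring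
          rw [h1', Complex.exp_sub, Complex.exp_two_pi_mul_I, div_one]
        rw [hexp, show Complex.exp ((θ:ℂ) * I) * (R:ℂ) = circleMap 0 R θ by
          rw [hcm, mul_comm]] at h
        have habs : |θ - 2*π| = 2*π - θ := by
          rw [_root_.abs_of_nonpos (by linarith)]; ring
        rw [hm']
        rwa [habs] at h
    have hnorm : ‖deriv (circleMap 0 R) θ •
        ((circleMap 0 R θ - (r:ℂ)) ^ 2)⁻¹ • (f (circleMap 0 R θ) - f (R:ℂ))‖
        = R * ((D^2)⁻¹ * ‖f (circleMap 0 R θ) - f (R:ℂ)‖) := by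
      rw [norm_smul, norm_smul, deriv_circleMap, norm_mul, norm_inv, norm_pow,
        Complex.norm_I, mul_one, norm_circleMap_zero,
        _root_.abs_of_nonneg hR0.le]
    rw [hnorm]
    have hP : 0 < d + m := by linarith
    calc R * ((D^2)⁻¹ * ‖f (circleMap 0 R θ) - f (R:ℂ)‖)
        ≤ 1 * ((1024/(d+m)^2) * (A*(d+m)^μ)) := by
          have e1 : (D^2)⁻¹ ≤ 1024/(d+m)^2 := by
            rw [inv_eq_one_div, div_le_div_iff₀ (by positivity) (by positivity)]
            nlinarith
          have e2 : ‖f (circleMap 0 R θ) - f (R:ℂ)‖ ≤ A*(d+m)^μ :=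
            hNum.trans (mul_le_mul_of_nonneg_left
              (Real.rpow_le_rpow hm0 (by linarith) hμ0.le) hA.le)
          apply mul_le_mul hR1.le
            (mul_le_mul e1 e2 (norm_nonneg _) (by positivity)) ?_ (by norm_num)
          positivity
      _ = 1024*A*((d+m)^μ/(d+m)^2) := by ring
      _ = 1024*A*(d+m)^(μ-2) := by rw [Real.rpow_sub hP, Real.rpow_two]
      _ ≤ 1024*A*((d+θ)^(μ-2) + (d+(2*π-θ))^(μ-2)) := by
          have hleft : 0 ≤ (d+θ)^(μ-2) := Real.rpow_nonneg (by linarith) _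
          have hright : 0 ≤ (d+(2*π-θ))^(μ-2) := Real.rpow_nonneg (by linarith) _
          have hcoef : (0:ℝ) ≤ 1024*A := by positivity
          rcases min_cases θ (2*π-θ) with ⟨hmeq, _⟩ | ⟨hmeq, _⟩
          · rw [hmdef, hmeq]
            nlinarith
          · rw [hmdef, hmeq]
            nlinarith
  -- the integral bound
  have hbound : ‖∮ z in C(0, R), ((z - (r:ℂ)) ^ 2)⁻¹ • (f z - f (R:ℂ))‖
      ≤ 2048 * A / (1 - μ) * d ^ (μ - 1) := by
    set g : ℝ → ℝ := fun θ => 1024*A*((d+θ)^(μ-2) + (d+(2*π-θ))^(μ-2)) with hg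
    have hcont1 : ContinuousOn (fun θ : ℝ => (d+θ)^(μ-2)) (uIcc (0:ℝ) (2*π)) := by
      apply ContinuousOn.rpow_const (continuousOn_const.add continuousOn_id)
      intro x hx
      rw [uIcc_of_le (by linarith : (0:ℝ) ≤ 2*π), mem_Icc] at hx
      refine Or.inl fun hcon => ?_
      simp only [Pi.add_apply, id_eq] at hcon
      linarith [hx.1]
    have hcont2 : ContinuousOn (fun θ : ℝ => (d+(2*π-θ))^(μ-2)) (uIcc (0:ℝ) (2*π)) := by
      apply ContinuousOn.rpow_const
        (continuousOn_const.add (continuousOn_const.sub continuousOn_id))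
      intro x hx
      rw [uIcc_of_le (by linarith : (0:ℝ) ≤ 2*π), mem_Icc] at hx
      refine Or.inl fun hcon => ?_
      simp only [Pi.add_apply, Pi.sub_apply, id_eq] at hcon
      linarith [hx.2]
    have hint1 : IntervalIntegrable (fun θ : ℝ => (d+θ)^(μ-2)) volume 0 (2*π) :=
      hcont1.intervalIntegrable
    have hint2 : IntervalIntegrable (fun θ : ℝ => (d+(2*π-θ))^(μ-2)) volume 0 (2*π) :=
      hcont2.intervalIntegrable
    have hintg : IntervalIntegrable g volume 0 (2*π) := by
      apply IntervalIntegrable.const_mul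
      exact hint1.add hint2
    have hnormle : ‖∮ z in C(0, R), ((z - (r:ℂ)) ^ 2)⁻¹ • (f z - f (R:ℂ))‖
        ≤ |∫ θ in (0:ℝ)..(2*π), g θ| := by
      rw [circleIntegral]
      exact (intervalIntegral.norm_integral_le_of_norm_le (by linarith)
        (Filter.Eventually.of_forall fun θ hθ => hptwise θ (by rwa [uIoc_of_le (by linarith)])) hintg).trans (le_abs_self _)
    have hgval : ∫ θ in (0:ℝ)..(2*π), g θ ≤ 2048 * A / (1 - μ) * d ^ (μ - 1) := by
      have hI1 : (∫ θ in (0:ℝ)..(2*π), (d+θ)^(μ-2)) = ∫ x in d..(d+2*π), x^(μ-2) := by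
        simpa using intervalIntegral.integral_comp_add_left (a := 0) (b := 2*π)
          (fun x : ℝ => x^(μ-2)) d
      have hI2 : (∫ θ in (0:ℝ)..(2*π), (d+(2*π-θ))^(μ-2)) = ∫ x in d..(d+2*π), x^(μ-2) := by
        have heq : (fun θ : ℝ => (d+(2*π-θ))^(μ-2)) = fun θ : ℝ => ((d+2*π)-θ)^(μ-2) := by
          funext θ; congr 1; ring
        rw [heq]
        have := intervalIntegral.integral_comp_sub_left (a := 0) (b := 2*π)
          (fun x : ℝ => x^(μ-2)) (d+2*π)
        rw [this]
        norm_num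
      have hval : (∫ x in d..(d+2*π), x^(μ-2)) ≤ d^(μ-1) / (1-μ) := by
        rw [integral_rpow (Or.inr ⟨by intro h; linarith,
          notMem_uIcc_of_lt hd0 (by linarith)⟩)]
        have hexp : μ - 2 + 1 = μ - 1 := by ring
        rw [hexp]
        have hnn : 0 ≤ (d+2*π)^(μ-1) := Real.rpow_nonneg (by linarith) _
        have heq : ((d+2*π)^(μ-1) - d^(μ-1))/(μ-1) = (d^(μ-1) - (d+2*π)^(μ-1))/(1-μ) := by
          have hne1 : μ - 1 ≠ 0 := by intro h; linarith [sub_eq_zero.mp h]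
          have hne2 : (1:ℝ) - μ ≠ 0 := by intro h; linarith [sub_eq_zero.mp h]
          field_simp
          ring
        rw [heq]
        gcongr
        · linarith
      have hsum : (∫ θ in (0:ℝ)..(2*π), g θ)
          = 1024*A*((∫ θ in (0:ℝ)..(2*π), (d+θ)^(μ-2))
            + ∫ θ in (0:ℝ)..(2*π), (d+(2*π-θ))^(μ-2)) := by
        rw [hg]
        rw [intervalIntegral.integral_const_mul, intervalIntegral.integral_add hint1 hint2]
      rw [hsum, hI1, hI2]
      calc 1024*A*((∫ x in d..(d+2*π), x^(μ-2)) + ∫ x in d..(d+2*π), x^(μ-2))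
          = 2048*A*(∫ x in d..(d+2*π), x^(μ-2)) := by ring
        _ ≤ 2048*A*(d^(μ-1)/(1-μ)) := by
            apply mul_le_mul_of_nonneg_left hval (by linarith)
        _ = 2048 * A / (1 - μ) * d ^ (μ - 1) := by ring
    calc ‖∮ z in C(0, R), ((z - (r:ℂ)) ^ 2)⁻¹ • (f z - f (R:ℂ))‖
        ≤ |∫ θ in (0:ℝ)..(2*π), g θ| := hnormle
      _ = ∫ θ in (0:ℝ)..(2*π), g θ := by
          apply _root_.abs_of_nonneg
          apply intervalIntegral.integral_nonneg (by linarith : (0:ℝ) ≤ 2*π)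
          intro θ hθ
          rw [mem_Icc] at hθ
          have ha : 0 ≤ (d+θ)^(μ-2) := Real.rpow_nonneg (by linarith [hθ.1]) _
          have hb : 0 ≤ (d+(2*π-θ))^(μ-2) := Real.rpow_nonneg (by linarith [hθ.2]) _
          positivity
      _ ≤ 2048 * A / (1 - μ) * d ^ (μ - 1) := hgval
  -- conclusion
  have h2πnorm : ‖((2*(π:ℂ)*I : ℂ))⁻¹‖ = (2*π)⁻¹ := by
    rw [norm_inv, norm_mul, norm_mul, Complex.norm_I, mul_one, Complex.norm_real,
      Real.norm_eq_abs, _root_.abs_of_nonneg Real.pi_pos.le]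
    norm_num
  have hcoef : (0:ℝ) ≤ 2048*A/(1-μ) := by
    apply div_nonneg (by linarith) (by linarith)
  calc ‖deriv f (r:ℂ)‖
      = ‖((2*(π:ℂ)*I : ℂ))⁻¹ • ∮ z in C(0, R), ((z - (r:ℂ)) ^ 2)⁻¹ • f z‖ := by
        rw [hcau]
    _ = (2*π)⁻¹ * ‖∮ z in C(0, R), ((z - (r:ℂ)) ^ 2)⁻¹ • f z‖ := by
        rw [norm_smul, h2πnorm]
    _ ≤ 1 * ‖∮ z in C(0, R), ((z - (r:ℂ)) ^ 2)⁻¹ • f z‖ := by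
        apply mul_le_mul_of_nonneg_right ?_ (norm_nonneg _)
        rw [inv_le_one_iff₀]
        right; linarith [Real.pi_gt_three]
    _ = ‖∮ z in C(0, R), ((z - (r:ℂ)) ^ 2)⁻¹ • (f z - f (R:ℂ))‖ := by
        rw [one_mul, hsplit]
    _ ≤ 2048 * A / (1 - μ) * d ^ (μ - 1) := hbound
    _ ≤ 4096 * A / (1 - μ) * (1 - r) ^ (μ - 1) := by
        have hdid : d^(μ-1) ≤ 2*(1-r)^(μ-1) := by
          have hs2 : d^(μ-1) = (1-r)^(μ-1) * ((1/2:ℝ))^(μ-1) := by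
            rw [← Real.mul_rpow (by linarith) (by norm_num)]
            congr 1
            rw [hddef]; ring
          have h12 : ((1/2:ℝ))^(μ-1) ≤ 2 := by
            have e1 : ((1/2:ℝ))^(μ-1) = (2:ℝ)^(1-μ) := by
              rw [show (1/2:ℝ) = 2⁻¹ by norm_num,
                Real.inv_rpow (by norm_num : (0:ℝ) ≤ 2),
                ← Real.rpow_neg (by norm_num : (0:ℝ) ≤ 2),
                show -(μ-1) = 1-μ by ring]
            rw [e1]
            calc (2:ℝ)^(1-μ) ≤ 2^(1:ℝ) :=
                Real.rpow_le_rpow_of_exponent_le (by norm_num) (by linarith)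
              _ = 2 := Real.rpow_one 2
          calc d^(μ-1) = (1-r)^(μ-1) * ((1/2:ℝ))^(μ-1) := hs2
            _ ≤ (1-r)^(μ-1) * 2 :=
                mul_le_mul_of_nonneg_left h12 (Real.rpow_nonneg (by linarith) _)
            _ = 2*(1-r)^(μ-1) := by ring
        calc 2048*A/(1-μ)*d^(μ-1) ≤ 2048*A/(1-μ)*(2*(1-r)^(μ-1)) :=
              mul_le_mul_of_nonneg_left hdid hcoef
          _ = 4096 * A / (1 - μ) * (1 - r) ^ (μ - 1) := by ring

/-- Converse Hardy–Littlewood theorem: if `f` is holomorphic on the unit disk,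
bounded by `C`, continuous on the closed disk, with boundary values satisfying
`|f(e^{it}) - f(e^{is})| ≤ A |t - s|^μ`, then `|f'(ζ)| ≤ N (1 - |ζ|)^(μ-1)` on
the disk, where `N` depends only on `A`, `C` and `μ`. -/
theorem stmt_5 (A C μ : ℝ) (hA : 0 < A) (hC : 0 < C) (hμ : μ ∈ Set.Ioo (0 : ℝ) 1) :
    ∃ N : ℝ, ∀ f : ℂ → ℂ,
      DifferentiableOn ℂ f (ball (0 : ℂ) 1) →
      ContinuousOn f (closedBall (0 : ℂ) 1) →
      (∀ z ∈ ball (0 : ℂ) 1, ‖f z‖ ≤ C) →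
      (∀ s t : ℝ, ‖f (Complex.exp (I * t)) - f (Complex.exp (I * s))‖ ≤ A * |t - s| ^ μ) →
      ∀ ζ ∈ ball (0 : ℂ) 1, ‖deriv f ζ‖ ≤ N * (1 - ‖ζ‖) ^ (μ - 1) := by
  obtain ⟨hμ0, hμ1⟩ := hμ
  refine ⟨4096 * A / (1 - μ), ?_⟩
  intro f hdf hcf _hbf hhf ζ hζ
  have hζ1 : ‖ζ‖ < 1 := mem_ball_zero_iff.mp hζ
  set u : ℂ := Complex.exp ((ζ.arg : ℂ) * I) with hu
  have hnu : ‖u‖ = 1 := by rw [hu, Complex.norm_exp_ofReal_mul_I]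
  have hζeq : u * ((‖ζ‖ : ℝ) : ℂ) = ζ := by
    have h0 := Complex.norm_mul_exp_arg_mul_I ζ
    rw [hu, mul_comm]
    exact h0
  set g : ℂ → ℂ := fun z => f (u * z) with hg
  have hmaps : Set.MapsTo (fun z : ℂ => u * z) (ball (0:ℂ) 1) (ball (0:ℂ) 1) := by
    intro w hw
    rw [mem_ball_zero_iff] at hw ⊢
    rw [norm_mul, hnu, one_mul]; exact hw
  have hmaps' : Set.MapsTo (fun z : ℂ => u * z) (closedBall (0:ℂ) 1) (closedBall (0:ℂ) 1) := by
    intro w hw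
    rw [mem_closedBall_zero_iff] at hw ⊢
    rw [norm_mul, hnu, one_mul]; exact hw
  have hdg : DifferentiableOn ℂ g (ball (0:ℂ) 1) :=
    hdf.comp (differentiable_id.const_mul u).differentiableOn hmaps
  have hcg : ContinuousOn g (closedBall (0:ℂ) 1) :=
    hcf.comp (continuous_const.mul continuous_id).continuousOn hmaps'
  have hhg : ∀ s t : ℝ, ‖g (Complex.exp (I * t)) - g (Complex.exp (I * s))‖ ≤ A * |t - s| ^ μ := by
    intro s t
    have e : ∀ x : ℝ, u * Complex.exp (I * (x:ℂ)) = Complex.exp (I * ((ζ.arg + x : ℝ) : ℂ)) := by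
      intro x
      rw [hu, ← Complex.exp_add]
      congr 1
      push_cast
      ring
    simp only [hg]
    rw [e t, e s]
    have h := hhf (ζ.arg + s) (ζ.arg + t)
    have habs : ζ.arg + t - (ζ.arg + s) = t - s := by ring
    rwa [habs] at h
  have hgd := core hA hμ0 hμ1 g hdg hcg hhg ‖ζ‖ (norm_nonneg ζ) hζ1
  have hfd : DifferentiableAt ℂ f ζ := hdf.differentiableAt (isOpen_ball.mem_nhds hζ)
  have hgder : deriv g ((‖ζ‖ : ℝ) : ℂ) = deriv f ζ * u := by
    have h1 : HasDerivAt f (deriv f ζ) (u * ((‖ζ‖ : ℝ) : ℂ)) := by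
      rw [hζeq]
      exact hfd.hasDerivAt
    have h2 : HasDerivAt (fun z : ℂ => u * z) u ((‖ζ‖ : ℝ) : ℂ) := by
      simpa using (hasDerivAt_id (((‖ζ‖ : ℝ) : ℂ))).const_mul u
    have hcomp := h1.comp (((‖ζ‖ : ℝ) : ℂ)) h2
    exact hcomp.deriv
  rw [hgder, norm_mul, hnu, mul_one] at hgd
  exact hgd
end

section
/- Let μ ∈ (0,1), M > 0. Suppose u is a bounded continuous real-valued function on the unit circle satisfying the one-point Hölder condition |u(e^{it}) - u(e^{is₀})| ≤ M|e^{it} - e^{is₀}|^μ for almost every t with |t - s₀| < δ, and let f be the holomorphic function on 𝔻 given by the Schwarz integral of u (i.e. Re f has boundary values u). Then there is a constant N (depending on δ, μ, M, and sup|u|) such that |f'(r e^{is₀})| ≤ N(1-r)^{μ-1} for all 0 < r < 1. -/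
open Complex Metric MeasureTheory intervalIntegral Real

namespace PrivAux

noncomputable def e (t : ℝ) : ℂ := Complex.exp (I * t)

lemma norm_e (t : ℝ) : ‖e t‖ = 1 := by
  simp [e, Complex.norm_exp]

lemma e_ne_zero (t : ℝ) : e t ≠ 0 := by
  intro h; have := norm_e t; rw [h] at this; simp at this

lemma e_per (t : ℝ) : e (t + 2 * π) = e t := by
  simp only [e]
  rw [Complex.ofReal_add, mul_add, Complex.exp_add,
    show I * ((2 * π : ℝ) : ℂ) = 2 * π * I by push_cast; ring, Complex.exp_two_pi_mul_I, mul_one]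

lemma e_mul (t s : ℝ) : e (t + s) = e t * e s := by
  simp only [e]
  rw [← Complex.exp_add]; push_cast; ring_nf

lemma hasDerivAt_e (t : ℝ) : HasDerivAt e (I * e t) t := by
  have h : HasDerivAt (fun z : ℂ => Complex.exp (I * z)) (I * Complex.exp (I * t)) (t : ℂ) := by
    simpa [mul_comm] using ((hasDerivAt_id (t : ℂ)).const_mul I).cexp
  exact h.comp_ofReal

lemma norm_e_sub_one (θ : ℝ) : ‖e θ - 1‖ = 2 * |Real.sin (θ / 2)| := by
  have hre : (e θ - 1).re = Real.cos θ - 1 := by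
    simp [e, mul_comm I, Complex.exp_ofReal_mul_I_re]
  have him : (e θ - 1).im = Real.sin θ := by
    simp [e, mul_comm I, Complex.exp_ofReal_mul_I_im]
  rw [Complex.norm_def, Complex.normSq_apply, hre, him]
  have h1 : Real.cos θ = 2 * Real.cos (θ / 2) ^ 2 - 1 := by
    have := Real.cos_two_mul (θ / 2); rwa [mul_div_cancel₀ θ two_ne_zero] at this
  have h2 : Real.sin θ ^ 2 + Real.cos θ ^ 2 = 1 := Real.sin_sq_add_cos_sq θ
  have h3 : Real.sin (θ / 2) ^ 2 + Real.cos (θ / 2) ^ 2 = 1 := Real.sin_sq_add_cos_sq _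
  have : (Real.cos θ - 1) * (Real.cos θ - 1) + Real.sin θ * Real.sin θ
      = (2 * |Real.sin (θ / 2)|) ^ 2 := by
    rw [mul_pow, _root_.sq_abs]; nlinarith
  rw [this, Real.sqrt_sq (by positivity)]

lemma norm_e_sub_e (t s : ℝ) : ‖e t - e s‖ = 2 * |Real.sin ((t - s) / 2)| := by
  have h : e t - e s = e s * (e (t - s) - 1) := by
    rw [mul_sub, mul_one, ← e_mul]; ring_nf
  rw [h, norm_mul, norm_e, one_mul, norm_e_sub_one]

lemma chord_le (t s : ℝ) : ‖e t - e s‖ ≤ |t - s| := by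
  rw [norm_e_sub_e]
  have h := Real.abs_sin_le_abs (x := (t - s) / 2)
  have h2 : |(t - s) / 2| = |t - s| / 2 := by rw [abs_div]; simp
  linarith


lemma continuous_e : Continuous e :=
  Complex.continuous_exp.comp (continuous_const.mul Complex.continuous_ofReal)

lemma norm_sub_ge (ζ : ℂ) (t : ℝ) : 1 - ‖ζ‖ ≤ ‖e t - ζ‖ := by
  have := norm_sub_norm_le (e t) ζ
  rw [norm_e] at this; linarith

lemma e_sub_ne_zero {ζ : ℂ} (h : ‖ζ‖ < 1) (t : ℝ) : e t - ζ ≠ 0 := by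
  intro h0
  have := norm_sub_ge ζ t; rw [h0, norm_zero] at this; linarith

lemma norm_sub_ge_div_pi {r : ℝ} (hr0 : 0 ≤ r) (hr1 : r ≤ 1) {s t : ℝ} (hθ : |t - s| ≤ π) :
    |t - s| / π ≤ ‖e t - r * e s‖ := by
  have hfac : e t - (r : ℂ) * e s = e s * (e (t - s) - r) := by
    rw [mul_sub, ← e_mul]; ring_nf
  rw [hfac, norm_mul, norm_e, one_mul]
  set θ := t - s with hθdef
  have h1 : 1 - r ≤ ‖e θ - (r : ℂ)‖ := by
    have := norm_sub_norm_le (e θ) (r : ℂ)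
    rw [norm_e, Complex.norm_real, Real.norm_eq_abs, _root_.abs_of_nonneg hr0] at this; linarith
  have h2 : ‖e θ - 1‖ ≤ ‖e θ - (r : ℂ)‖ + (1 - r) := by
    have : e θ - 1 = (e θ - (r : ℂ)) - ((1 : ℂ) - (r : ℂ)) := by ring
    rw [this]
    refine (norm_sub_le _ _).trans ?_
    have : ‖(1 : ℂ) - (r : ℂ)‖ = 1 - r := by
      rw [show (1 : ℂ) - (r : ℂ) = ((1 - r : ℝ) : ℂ) by push_cast; ring,
        Complex.norm_real, Real.norm_eq_abs, _root_.abs_of_nonneg (by linarith)]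
    rw [this]
  have h3 : 2 * (|θ| / π) ≤ ‖e θ - 1‖ := by
    have hsin : |θ| / π ≤ |Real.sin (θ / 2)| := by
      have hπ := Real.pi_pos
      rcases le_or_gt 0 θ with hc | hc
      · have hle : θ / 2 ≤ π / 2 := by
          rw [_root_.abs_of_nonneg hc] at hθ; linarith
        have := Real.mul_le_sin (x := θ / 2) (by linarith) hle
        rw [_root_.abs_of_nonneg hc]
        calc θ / π = 2 / π * (θ / 2) := by field_simp
          _ ≤ Real.sin (θ / 2) := this
          _ ≤ |Real.sin (θ / 2)| := le_abs_self _
      · have hle : -θ / 2 ≤ π / 2 := by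
          rw [_root_.abs_of_neg hc] at hθ; linarith
        have := Real.mul_le_sin (x := -θ / 2) (by linarith) hle
        rw [_root_.abs_of_neg hc]
        calc -θ / π = 2 / π * (-θ / 2) := by field_simp
          _ ≤ Real.sin (-θ / 2) := this
          _ ≤ |Real.sin (-θ / 2)| := le_abs_self _
          _ = |Real.sin (θ / 2)| := by
            rw [show -θ / 2 = -(θ / 2) by ring, Real.sin_neg, abs_neg]
    have : ‖e θ - 1‖ = 2 * |Real.sin (θ / 2)| := by
      have := norm_e_sub_e θ 0
      simpa [e] using this
    rw [this]; linarith
  have hπ := Real.pi_pos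
  have : |θ| / π ≤ ‖e θ - (r : ℂ)‖ := by linarith
  exact this

noncomputable def kern (z : ℂ) (t : ℝ) : ℂ := 2 * e t / (e t - z) ^ 2

lemma norm_kern (z : ℂ) (t : ℝ) : ‖kern z t‖ = 2 / ‖e t - z‖ ^ 2 := by
  rw [kern, norm_div, norm_mul, norm_e, norm_pow]
  norm_num

lemma norm_kern_le {z : ℂ} {t : ℝ} {c : ℝ} (hc : 0 < c) (h : c ≤ ‖e t - z‖) :
    ‖kern z t‖ ≤ 2 / c ^ 2 := by
  rw [norm_kern]
  gcongr

lemma continuous_kern {z : ℂ} (hz : ‖z‖ < 1) : Continuous (kern z) := by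
  apply Continuous.div (continuous_const.mul continuous_e)
    ((continuous_e.sub continuous_const).pow 2)
  intro t
  exact pow_ne_zero 2 (e_sub_ne_zero hz t)

lemma hasDerivAt_F (u : ℝ → ℝ) (t : ℝ) {z : ℂ} (hz : ‖z‖ < 1) :
    HasDerivAt (fun w => (u t : ℂ) * (e t + w) / (e t - w)) ((u t : ℂ) * kern z t) z := by
  have h1 : HasDerivAt (fun w : ℂ => (u t : ℂ) * (e t + w)) ((u t : ℂ)) z := by
    simpa using ((hasDerivAt_id z).const_add (e t)).const_mul (u t : ℂ)
  have h2 : HasDerivAt (fun w : ℂ => e t - w) (-1) z := by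
    simpa using (hasDerivAt_id z).const_sub (e t)
  have h3 := h1.div h2 (e_sub_ne_zero hz t)
  refine h3.congr_deriv ?_
  have hne := e_sub_ne_zero hz t
  rw [kern]
  field_simp
  ring

lemma integral_kern {z : ℂ} (hz : ‖z‖ < 1) : (∫ t in (0 : ℝ)..(2 * π), kern z t) = 0 := by
  have hd : ∀ t ∈ Set.uIcc (0 : ℝ) (2 * π),
      HasDerivAt (fun s => (2 / I) * (-(e s - z)⁻¹)) (kern z t) t := by
    intro t _
    have hC : HasDerivAt (fun w : ℂ => 2 / I * -(Complex.exp (I * w) - z)⁻¹)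
        (2 / I * -(-(I * Complex.exp (I * t)) / (Complex.exp (I * (t : ℂ)) - z) ^ 2)) (t : ℂ) := by
      have hexp : HasDerivAt (fun w : ℂ => Complex.exp (I * w) - z)
          (I * Complex.exp (I * t)) (t : ℂ) := by
        simpa [mul_comm] using (((hasDerivAt_id (t : ℂ)).const_mul I).cexp).sub_const z
      exact ((hexp.inv (e_sub_ne_zero hz t)).neg).const_mul (2 / I)
    have h2 := hC.comp_ofReal
    refine h2.congr_deriv ?_
    have hne := e_sub_ne_zero hz t
    have hI : (I : ℂ) ^ 2 = -1 := Complex.I_sq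
    field_simp [kern, e]
    rfl
  rw [intervalIntegral.integral_eq_sub_of_hasDerivAt hd
    ((continuous_kern hz).intervalIntegrable _ _)]
  have : e (2 * π) = e 0 := by
    have := e_mul 0 (2 * π)
    simpa [show (0 : ℝ) + 2 * π = 2 * π by ring] using
      (by rw [show (2 : ℝ) * π = 0 + 2 * π by ring]; exact e_per 0 : e (2 * π) = e 0)
  rw [this]; ring


lemma continuous_F (u : ℝ → ℝ) (hu : Continuous u) {x : ℂ} (hx : ‖x‖ < 1) :
    Continuous (fun t => (u t : ℂ) * (e t + x) / (e t - x)) := by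
  apply Continuous.div
  · exact (Complex.continuous_ofReal.comp hu).mul (continuous_e.add continuous_const)
  · exact continuous_e.sub continuous_const
  · exact fun t => e_sub_ne_zero hx t

lemma hasDerivAt_schwarz (u : ℝ → ℝ) (hu : Continuous u) {Mu : ℝ} (hb : ∀ t, |u t| ≤ Mu)
    {z₀ : ℂ} (h0 : ‖z₀‖ < 1) :
    HasDerivAt (fun z => ∫ t in (0 : ℝ)..(2 * π), (u t : ℂ) * (e t + z) / (e t - z))
      (∫ t in (0 : ℝ)..(2 * π), (u t : ℂ) * kern z₀ t) z₀ := by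
  set ε := (1 - ‖z₀‖) / 2 with hε
  have hεpos : 0 < ε := by rw [hε]; linarith
  have hMu0 : 0 ≤ Mu := (abs_nonneg _).trans (hb 0)
  have hball : ∀ x ∈ ball z₀ ε, ‖x‖ < 1 ∧ ∀ t : ℝ, ε ≤ ‖e t - x‖ := by
    intro x hx
    rw [mem_ball, dist_eq_norm] at hx
    have h1 : ‖x‖ < ‖z₀‖ + ε := by
      have := norm_sub_norm_le x z₀; linarith
    have hεval : ε = (1 - ‖z₀‖) / 2 := hε
    have h2 : ‖x‖ < 1 := by linarith
    refine ⟨h2, fun t => ?_⟩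
    have h3 : ε ≤ 1 - ‖x‖ := by linarith
    linarith [norm_sub_ge x t]
  refine (intervalIntegral.hasDerivAt_integral_of_dominated_loc_of_deriv_le
    (F := fun z t => (u t : ℂ) * (e t + z) / (e t - z))
    (F' := fun z t => (u t : ℂ) * kern z t)
    (bound := fun _ => Mu * (2 / ε ^ 2)) (ball_mem_nhds z₀ hεpos) ?_ ?_ ?_ ?_ ?_ ?_).2
  · filter_upwards [isOpen_ball.mem_nhds (mem_ball_self hεpos)] with x hx
    exact (continuous_F u hu (hball x hx).1).aestronglyMeasurable
  · exact (continuous_F u hu h0).intervalIntegrable _ _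
  · exact ((Complex.continuous_ofReal.comp hu).mul (continuous_kern h0)).aestronglyMeasurable
  · refine Filter.Eventually.of_forall fun t _ x hx => ?_
    obtain ⟨hx1, hx2⟩ := hball x hx
    rw [norm_mul, Complex.norm_real, Real.norm_eq_abs]
    exact mul_le_mul (hb t) (norm_kern_le hεpos (hx2 t)) (norm_nonneg _) hMu0
  · exact intervalIntegrable_const
  · refine Filter.Eventually.of_forall fun t _ x hx => ?_
    exact hasDerivAt_F u t (hball x hx).1


end PrivAux

set_option maxHeartbeats 1600000 in
open PrivAux in
/-- Pointwise Privalov-type derivative estimate for the Schwarz integral: if the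
boundary function `u` satisfies a one-point Hölder condition at `e^{i s₀}` (for a.e.
`t` with `|t - s₀| < δ`), and `f` is the Schwarz integral of `u`, then
`|f'(r e^{i s₀})| ≤ N (1 - r)^(μ - 1)` for `0 < r < 1`. -/
theorem stmt_6 (μ δ M Mu s₀ Cst : ℝ) (hμ : μ ∈ Set.Ioo (0 : ℝ) 1) (hδ : 0 < δ)
    (hM : 0 < M) (u : ℝ → ℝ) (hu_cont : Continuous u)
    (hu_per : ∀ t : ℝ, u (t + 2 * π) = u t)
    (hu_bdd : ∀ t : ℝ, |u t| ≤ Mu)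
    (hu_hold : ∀ᵐ t : ℝ, |t - s₀| < δ →
      |u t - u s₀| ≤ M * ‖Complex.exp (I * t) - Complex.exp (I * s₀)‖ ^ μ)
    (f : ℂ → ℂ)
    (hf : ∀ ζ ∈ ball (0 : ℂ) 1, f ζ =
      (1 / (2 * π)) • (∫ t in (0 : ℝ)..(2 * π),
        (u t : ℂ) * (Complex.exp (I * t) + ζ) / (Complex.exp (I * t) - ζ)) +
        (Cst : ℂ) * I) :
    ∃ N : ℝ, 0 < N ∧ ∀ r : ℝ, 0 < r → r < 1 →
      ‖deriv f ((r : ℂ) * Complex.exp (I * s₀))‖ ≤ N * (1 - r) ^ (μ - 1) := by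
  obtain ⟨hμ0, hμ1⟩ := hμ
  have hπ := Real.pi_pos
  have h1μ : (0 : ℝ) < 1 - μ := by linarith
  have hMu0 : 0 ≤ Mu := (abs_nonneg _).trans (hu_bdd 0)
  set δ' : ℝ := min (δ / 2) π with hδ'def
  have hδ'0 : 0 < δ' := lt_min (by linarith) hπ
  have hδ'π : δ' ≤ π := min_le_right _ _
  have hδ'δ : δ' < δ := lt_of_le_of_lt (min_le_left _ _) (by linarith)
  set cfar : ℝ := 2 * Mu * (2 / (δ' / π) ^ 2) with hcfar
  have hcfar0 : 0 ≤ cfar :=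
    mul_nonneg (mul_nonneg zero_le_two hMu0) (div_nonneg zero_le_two (sq_nonneg _))
  set c1 : ℝ := 2 * Mu * (2 / δ' ^ 2) * (2 * δ') with hc1
  have hc10 : 0 ≤ c1 := by
    apply mul_nonneg (mul_nonneg (mul_nonneg zero_le_two hMu0)
      (div_nonneg zero_le_two (sq_nonneg _)))
    linarith
  set c2 : ℝ := 4 * M + 4 * M * π ^ 2 / (1 - μ) with hc2
  have hc20 : 0 ≤ c2 := by
    have : 0 ≤ 4 * M * π ^ 2 / (1 - μ) :=
      div_nonneg (mul_nonneg (by linarith) (sq_nonneg _)) h1μ.le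
    have : (0:ℝ) ≤ 4 * M := by linarith
    simp only [hc2]
    positivity
  set K : ℝ := 2 * (cfar * π) + c1 + c2 with hK
  have hK0 : 0 ≤ K := by
    have := mul_nonneg hcfar0 hπ.le
    simp only [hK]; linarith
  refine ⟨K / (2 * π) + 1,
    add_pos_of_nonneg_of_pos (div_nonneg hK0 (by positivity)) one_pos, ?_⟩
  intro r hr0 hr1
  set h' : ℝ := 1 - r with hh'
  have hh'0 : 0 < h' := by linarith
  have hh'1 : h' ≤ 1 := by linarith
  have hpow0 : 0 < h' ^ (μ - 1) := Real.rpow_pos_of_pos hh'0 _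
  have hpow1 : 1 ≤ h' ^ (μ - 1) :=
    Real.one_le_rpow_of_pos_of_le_one_of_nonpos hh'0 hh'1 (by linarith)
  set z₀ : ℂ := (r : ℂ) * Complex.exp (I * s₀) with hz₀
  have hz₀e : z₀ = (r : ℂ) * e s₀ := rfl
  have hz₀norm : ‖z₀‖ = r := by
    rw [hz₀e, norm_mul, norm_e, mul_one, Complex.norm_real, Real.norm_eq_abs,
      _root_.abs_of_nonneg hr0.le]
  have hz₀lt : ‖z₀‖ < 1 := by rw [hz₀norm]; linarith
  have hnorm_ge : ∀ t : ℝ, h' ≤ ‖e t - z₀‖ := by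
    intro t
    have := norm_sub_ge z₀ t
    rw [hz₀norm] at this
    linarith
  -- Step A : derivative formula
  set D : ℂ := ∫ t in (0 : ℝ)..(2 * π), (u t : ℂ) * kern z₀ t with hD
  have hDeriv : deriv f z₀ = (1 / (2 * π)) • D := by
    have hmem : z₀ ∈ ball (0 : ℂ) 1 := mem_ball_zero_iff.mpr hz₀lt
    have heq : f =ᶠ[nhds z₀] fun ζ =>
        (1 / (2 * π)) • (∫ t in (0 : ℝ)..(2 * π),
          (u t : ℂ) * (e t + ζ) / (e t - ζ)) + (Cst : ℂ) * I := by
      filter_upwards [isOpen_ball.mem_nhds hmem] with ζ hζ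
      simpa only [e] using hf ζ hζ
    rw [heq.deriv_eq]
    exact (((hasDerivAt_schwarz u hu_cont hu_bdd hz₀lt).const_smul
      ((1 : ℝ) / (2 * π))).add_const _).deriv
  -- Step B : subtract the constant
  set g : ℝ → ℂ := fun t => ((u t - u s₀ : ℝ) : ℂ) * kern z₀ t with hg
  have hgcont : Continuous g :=
    (Complex.continuous_ofReal.comp (hu_cont.sub continuous_const)).mul (continuous_kern hz₀lt)
  have hgint : ∀ a b : ℝ, IntervalIntegrable g volume a b :=
    fun a b => hgcont.intervalIntegrable a b
  have hgnorm : ∀ t : ℝ, ‖g t‖ = |u t - u s₀| * ‖kern z₀ t‖ := by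
    intro t
    simp only [hg, norm_mul, Complex.norm_real, Real.norm_eq_abs]
  have hub2 : ∀ t : ℝ, |u t - u s₀| ≤ 2 * Mu := by
    intro t
    have h1 := norm_sub_le (u t) (u s₀)
    simp only [Real.norm_eq_abs] at h1
    linarith [hu_bdd t, hu_bdd s₀]
  have hDsub : D = ∫ t in (0 : ℝ)..(2 * π), g t := by
    have h1 : IntervalIntegrable (fun t => (u t : ℂ) * kern z₀ t) volume 0 (2 * π) :=
      ((Complex.continuous_ofReal.comp hu_cont).mul (continuous_kern hz₀lt)).intervalIntegrable _ _
    have h2 : IntervalIntegrable (fun t => (u s₀ : ℂ) * kern z₀ t) volume 0 (2 * π) :=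
      (continuous_const.mul (continuous_kern hz₀lt)).intervalIntegrable _ _
    calc D = (∫ t in (0 : ℝ)..(2 * π), (u t : ℂ) * kern z₀ t)
          - (u s₀ : ℂ) * ∫ t in (0 : ℝ)..(2 * π), kern z₀ t := by
          rw [integral_kern hz₀lt, mul_zero, sub_zero]
      _ = ∫ t in (0 : ℝ)..(2 * π), ((u t : ℂ) * kern z₀ t - (u s₀ : ℂ) * kern z₀ t) := by
          rw [← intervalIntegral.integral_const_mul, ← intervalIntegral.integral_sub h1 h2]
      _ = ∫ t in (0 : ℝ)..(2 * π), g t := by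
          refine intervalIntegral.integral_congr fun t _ => ?_
          simp only [hg]; push_cast; ring
  -- Step C : periodic shift
  have hper : Function.Periodic g (2 * π) := by
    intro t
    have hk : kern z₀ (t + 2 * π) = kern z₀ t := by rw [kern, kern, e_per]
    simp only [hg, hu_per t, hk]
  have hshift : (∫ t in (0 : ℝ)..(2 * π), g t) = ∫ t in (s₀ - π)..(s₀ + π), g t := by
    have h := hper.intervalIntegral_add_eq 0 (s₀ - π)
    rw [zero_add] at h
    rw [h, show s₀ - π + 2 * π = s₀ + π by ring]
  -- Step D : splitting
  have hsplit : (∫ t in (s₀ - π)..(s₀ + π), g t) =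
      (∫ t in (s₀ - π)..(s₀ - δ'), g t) + (∫ t in (s₀ - δ')..(s₀ + δ'), g t)
        + (∫ t in (s₀ + δ')..(s₀ + π), g t) := by
    rw [intervalIntegral.integral_add_adjacent_intervals (hgint (s₀ - π) (s₀ - δ'))
        (hgint (s₀ - δ') (s₀ + δ')),
      intervalIntegral.integral_add_adjacent_intervals (hgint (s₀ - π) (s₀ + δ'))
        (hgint (s₀ + δ') (s₀ + π))]
  -- far bound
  have hfar : ∀ t : ℝ, δ' ≤ |t - s₀| → |t - s₀| ≤ π → ‖g t‖ ≤ cfar := by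
    intro t h1 h2
    have hk : ‖kern z₀ t‖ ≤ 2 / (δ' / π) ^ 2 := by
      apply norm_kern_le (by positivity)
      calc δ' / π ≤ |t - s₀| / π := by gcongr
        _ ≤ ‖e t - z₀‖ := by rw [hz₀e]; exact norm_sub_ge_div_pi hr0.le hr1.le h2
    rw [hgnorm]
    calc |u t - u s₀| * ‖kern z₀ t‖ ≤ (2 * Mu) * (2 / (δ' / π) ^ 2) :=
          mul_le_mul (hub2 t) hk (norm_nonneg _) (by linarith)
      _ = cfar := by rw [hcfar]
  have hA : ‖∫ t in (s₀ - π)..(s₀ - δ'), g t‖ ≤ cfar * π := by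
    have hb : ∀ t ∈ Set.uIoc (s₀ - π) (s₀ - δ'), ‖g t‖ ≤ cfar := by
      intro t ht
      rw [Set.uIoc_of_le (by linarith)] at ht
      have h1 : |t - s₀| = s₀ - t := by
        rw [_root_.abs_of_nonpos (by linarith [ht.2])]; ring
      exact hfar t (by rw [h1]; linarith [ht.2]) (by rw [h1]; linarith [ht.1])
    calc ‖∫ t in (s₀ - π)..(s₀ - δ'), g t‖ ≤ cfar * |s₀ - δ' - (s₀ - π)| :=
          intervalIntegral.norm_integral_le_of_norm_le_const hb
      _ = cfar * (π - δ') := by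
          rw [show s₀ - δ' - (s₀ - π) = π - δ' by ring, _root_.abs_of_nonneg (by linarith)]
      _ ≤ cfar * π := mul_le_mul_of_nonneg_left (by linarith) hcfar0
  have hC : ‖∫ t in (s₀ + δ')..(s₀ + π), g t‖ ≤ cfar * π := by
    have hb : ∀ t ∈ Set.uIoc (s₀ + δ') (s₀ + π), ‖g t‖ ≤ cfar := by
      intro t ht
      rw [Set.uIoc_of_le (by linarith)] at ht
      have h1 : |t - s₀| = t - s₀ := _root_.abs_of_nonneg (by linarith [ht.1])
      exact hfar t (by rw [h1]; linarith [ht.1]) (by rw [h1]; linarith [ht.2])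
    calc ‖∫ t in (s₀ + δ')..(s₀ + π), g t‖ ≤ cfar * |s₀ + π - (s₀ + δ')| :=
          intervalIntegral.norm_integral_le_of_norm_le_const hb
      _ = cfar * (π - δ') := by
          rw [show s₀ + π - (s₀ + δ') = π - δ' by ring, _root_.abs_of_nonneg (by linarith)]
      _ ≤ cfar * π := mul_le_mul_of_nonneg_left (by linarith) hcfar0
  -- near bound
  have hnear : ∀ᵐ t : ℝ, 0 < |t - s₀| → |t - s₀| ≤ δ' →
      ‖g t‖ ≤ 2 * M * π ^ 2 * |t - s₀| ^ (μ - 2) := by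
    filter_upwards [hu_hold] with t ht h0 h1
    have hlt : |t - s₀| < δ := lt_of_le_of_lt h1 hδ'δ
    have hu1 : |u t - u s₀| ≤ M * |t - s₀| ^ μ :=
      (ht hlt).trans (mul_le_mul_of_nonneg_left
        (Real.rpow_le_rpow (norm_nonneg _) (chord_le t s₀) hμ0.le) hM.le)
    have hk : ‖kern z₀ t‖ ≤ 2 / (|t - s₀| / π) ^ 2 := by
      apply norm_kern_le (div_pos h0 hπ)
      rw [hz₀e]; exact norm_sub_ge_div_pi hr0.le hr1.le (h1.trans hδ'π)
    rw [hgnorm]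
    calc |u t - u s₀| * ‖kern z₀ t‖ ≤ (M * |t - s₀| ^ μ) * (2 / (|t - s₀| / π) ^ 2) :=
          mul_le_mul hu1 hk (norm_nonneg _)
            (mul_nonneg hM.le (Real.rpow_nonneg (abs_nonneg _) _))
      _ = 2 * M * π ^ 2 * |t - s₀| ^ (μ - 2) := by
          have hpow2 : |t - s₀| ^ ((2 : ℝ)) = |t - s₀| ^ (2 : ℕ) := by
            rw [← Real.rpow_natCast]; norm_num
          rw [Real.rpow_sub h0, hpow2]
          field_simp
  have hB : ‖∫ t in (s₀ - δ')..(s₀ + δ'), g t‖ ≤ c1 * h' ^ (μ - 1) + c2 * h' ^ (μ - 1) := by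
    rcases le_or_gt δ' h' with hcase | hcase
    · have hb : ∀ t ∈ Set.uIoc (s₀ - δ') (s₀ + δ'), ‖g t‖ ≤ 2 * Mu * (2 / δ' ^ 2) := by
        intro t _
        have hk : ‖kern z₀ t‖ ≤ 2 / δ' ^ 2 :=
          norm_kern_le hδ'0 (le_trans hcase (hnorm_ge t))
        rw [hgnorm]
        exact mul_le_mul (hub2 t) hk (norm_nonneg _) (by linarith)
      have hle := intervalIntegral.norm_integral_le_of_norm_le_const hb
      have habs : |s₀ + δ' - (s₀ - δ')| = 2 * δ' := by
        rw [show s₀ + δ' - (s₀ - δ') = 2 * δ' by ring, _root_.abs_of_nonneg (by linarith)]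
      rw [habs] at hle
      have hc1eq : 2 * Mu * (2 / δ' ^ 2) * (2 * δ') = c1 := by rw [hc1]
      have hc1P : c1 ≤ c1 * h' ^ (μ - 1) := le_mul_of_one_le_right hc10 hpow1
      have hc2P : 0 ≤ c2 * h' ^ (μ - 1) := mul_nonneg hc20 hpow0.le
      linarith
    · -- h' < δ'
      have hsplitB : (∫ t in (s₀ - δ')..(s₀ + δ'), g t) =
          (∫ t in (s₀ - δ')..(s₀ - h'), g t) + (∫ t in (s₀ - h')..(s₀ + h'), g t)
            + (∫ t in (s₀ + h')..(s₀ + δ'), g t) := by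
        rw [intervalIntegral.integral_add_adjacent_intervals (hgint (s₀ - δ') (s₀ - h'))
            (hgint (s₀ - h') (s₀ + h')),
          intervalIntegral.integral_add_adjacent_intervals (hgint (s₀ - δ') (s₀ + h'))
            (hgint (s₀ + h') (s₀ + δ'))]
      have hmid : ‖∫ t in (s₀ - h')..(s₀ + h'), g t‖ ≤ 4 * M * h' ^ (μ - 1) := by
        have hbae : ∀ᵐ t : ℝ, t ∈ Set.uIoc (s₀ - h') (s₀ + h') →
            ‖g t‖ ≤ M * h' ^ μ * (2 / h' ^ 2) := by
          filter_upwards [hu_hold] with t ht hmem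
          rw [Set.uIoc_of_le (by linarith)] at hmem
          have habs : |t - s₀| ≤ h' := abs_le.mpr ⟨by linarith [hmem.1], by linarith [hmem.2]⟩
          have hlt : |t - s₀| < δ := lt_of_le_of_lt (habs.trans hcase.le) hδ'δ
          have hu1 : |u t - u s₀| ≤ M * h' ^ μ := by
            refine (ht hlt).trans ?_
            have hch : ‖Complex.exp (I * t) - Complex.exp (I * s₀)‖ ≤ h' :=
              (chord_le t s₀).trans habs
            exact mul_le_mul_of_nonneg_left
              (Real.rpow_le_rpow (norm_nonneg _) hch hμ0.le) hM.le
          have hk : ‖kern z₀ t‖ ≤ 2 / h' ^ 2 := norm_kern_le hh'0 (hnorm_ge t)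
          rw [hgnorm]
          exact mul_le_mul hu1 hk (norm_nonneg _)
            (mul_nonneg hM.le (Real.rpow_nonneg hh'0.le _))
        have hle := intervalIntegral.norm_integral_le_of_norm_le_const_ae hbae
        have habs2 : |s₀ + h' - (s₀ - h')| = 2 * h' := by
          rw [show s₀ + h' - (s₀ - h') = 2 * h' by ring, _root_.abs_of_nonneg (by linarith)]
        rw [habs2] at hle
        refine hle.trans (le_of_eq ?_)
        rw [Real.rpow_sub hh'0, Real.rpow_one]
        field_simp
        ring
      have hint_val : (∫ x in h'..δ', x ^ (μ - 2))
          = (δ' ^ (μ - 1) - h' ^ (μ - 1)) / (μ - 1) := by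
        rw [integral_rpow (Or.inr ⟨by intro hc; exact (by linarith : μ ≠ 1) (by linarith),
          by rw [Set.uIcc_of_le hcase.le]; exact fun hc => absurd hc.1 (not_le.mpr hh'0)⟩)]
        rw [show μ - 2 + 1 = μ - 1 by ring]
      have hBA : δ' ^ (μ - 1) ≤ h' ^ (μ - 1) :=
        Real.rpow_le_rpow_of_nonpos hh'0 hcase.le (by linarith)
      have hB0 : (0 : ℝ) ≤ δ' ^ (μ - 1) := Real.rpow_nonneg hδ'0.le _
      have h2Mπ : (0 : ℝ) ≤ 2 * M * π ^ 2 :=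
        mul_nonneg (by linarith) (sq_nonneg _)
      have heqv : 2 * M * π ^ 2 * ((δ' ^ (μ - 1) - h' ^ (μ - 1)) / (μ - 1))
          = 2 * M * π ^ 2 * ((h' ^ (μ - 1) - δ' ^ (μ - 1)) / (1 - μ)) := by
        congr 1
        rw [div_eq_div_iff (by linarith : μ - 1 < 0).ne h1μ.ne']
        ring
      have hfin : 2 * M * π ^ 2 * ((h' ^ (μ - 1) - δ' ^ (μ - 1)) / (1 - μ))
          ≤ 2 * M * π ^ 2 * h' ^ (μ - 1) / (1 - μ) := by
        rw [mul_div_assoc]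
        exact mul_le_mul_of_nonneg_left
          ((div_le_div_iff_of_pos_right h1μ).mpr (by linarith)) h2Mπ
      have hside_r : ‖∫ t in (s₀ + h')..(s₀ + δ'), g t‖
          ≤ 2 * M * π ^ 2 * h' ^ (μ - 1) / (1 - μ) := by
        have hbd : ∀ᵐ t ∂(volume.restrict (Set.uIoc (s₀ + h') (s₀ + δ'))),
            ‖g t‖ ≤ 2 * M * π ^ 2 * (t - s₀) ^ (μ - 2) := by
          filter_upwards [ae_restrict_of_ae hnear, ae_restrict_mem measurableSet_uIoc]
            with t ht hmem
          rw [Set.uIoc_of_le (by linarith)] at hmem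
          have h1 : |t - s₀| = t - s₀ := _root_.abs_of_nonneg (by linarith [hmem.1])
          have := ht (by rw [h1]; linarith [hmem.1]) (by rw [h1]; linarith [hmem.2])
          rwa [h1] at this
        have hbint : IntervalIntegrable (fun t => 2 * M * π ^ 2 * (t - s₀) ^ (μ - 2))
            volume (s₀ + h') (s₀ + δ') := by
          apply ContinuousOn.intervalIntegrable
          apply ContinuousOn.mul continuousOn_const
          apply ContinuousOn.rpow_const ((continuous_id.sub continuous_const).continuousOn)
          intro t ht
          rw [Set.uIcc_of_le (by linarith)] at ht
          exact Or.inl (by simp only [Pi.sub_apply, id]; exact ne_of_gt (by linarith [ht.1]))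
        have hle := intervalIntegral.norm_integral_le_abs_of_norm_le hbd hbint
        have hval : (∫ t in (s₀ + h')..(s₀ + δ'), 2 * M * π ^ 2 * (t - s₀) ^ (μ - 2))
            = 2 * M * π ^ 2 * ((δ' ^ (μ - 1) - h' ^ (μ - 1)) / (μ - 1)) := by
          rw [intervalIntegral.integral_const_mul]
          congr 1
          have hcomp := intervalIntegral.integral_comp_sub_right (a := s₀ + h')
            (b := s₀ + δ') (fun x => x ^ (μ - 2)) s₀
          simp only [show s₀ + h' - s₀ = h' from by ring,
            show s₀ + δ' - s₀ = δ' from by ring] at hcomp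
          rw [hcomp, hint_val]
        rw [hval, heqv, _root_.abs_of_nonneg
          (mul_nonneg h2Mπ (div_nonneg (by linarith) h1μ.le))] at hle
        exact hle.trans hfin
      have hside_l : ‖∫ t in (s₀ - δ')..(s₀ - h'), g t‖
          ≤ 2 * M * π ^ 2 * h' ^ (μ - 1) / (1 - μ) := by
        have hbd : ∀ᵐ t ∂(volume.restrict (Set.uIoc (s₀ - δ') (s₀ - h'))),
            ‖g t‖ ≤ 2 * M * π ^ 2 * (s₀ - t) ^ (μ - 2) := by
          filter_upwards [ae_restrict_of_ae hnear, ae_restrict_mem measurableSet_uIoc]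
            with t ht hmem
          rw [Set.uIoc_of_le (by linarith)] at hmem
          have h1 : |t - s₀| = s₀ - t := by
            rw [_root_.abs_of_nonpos (by linarith [hmem.2])]; ring
          have := ht (by rw [h1]; linarith [hmem.2]) (by rw [h1]; linarith [hmem.1])
          rwa [h1] at this
        have hbint : IntervalIntegrable (fun t => 2 * M * π ^ 2 * (s₀ - t) ^ (μ - 2))
            volume (s₀ - δ') (s₀ - h') := by
          apply ContinuousOn.intervalIntegrable
          apply ContinuousOn.mul continuousOn_const
          apply ContinuousOn.rpow_const ((continuous_const.sub continuous_id).continuousOn)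
          intro t ht
          rw [Set.uIcc_of_le (by linarith)] at ht
          exact Or.inl (ne_of_gt (by simp only [Pi.sub_apply, id]; linarith [ht.2]))
        have hle := intervalIntegral.norm_integral_le_abs_of_norm_le hbd hbint
        have hval : (∫ t in (s₀ - δ')..(s₀ - h'), 2 * M * π ^ 2 * (s₀ - t) ^ (μ - 2))
            = 2 * M * π ^ 2 * ((δ' ^ (μ - 1) - h' ^ (μ - 1)) / (μ - 1)) := by
          rw [intervalIntegral.integral_const_mul]
          congr 1
          have hcomp := intervalIntegral.integral_comp_sub_left (a := s₀ - δ')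
            (b := s₀ - h') (fun x => x ^ (μ - 2)) s₀
          simp only [show s₀ - (s₀ - h') = h' from by ring,
            show s₀ - (s₀ - δ') = δ' from by ring] at hcomp
          rw [hcomp, hint_val]
        rw [hval, heqv, _root_.abs_of_nonneg
          (mul_nonneg h2Mπ (div_nonneg (by linarith) h1μ.le))] at hle
        exact hle.trans hfin
      rw [hsplitB]
      have htri := (norm_add_le ((∫ t in (s₀ - δ')..(s₀ - h'), g t)
        + (∫ t in (s₀ - h')..(s₀ + h'), g t)) (∫ t in (s₀ + h')..(s₀ + δ'), g t)).trans
        (add_le_add_left (norm_add_le _ _) _)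
      have hc2eq : c2 * h' ^ (μ - 1)
          = 4 * M * h' ^ (μ - 1) + 2 * (2 * M * π ^ 2 * h' ^ (μ - 1) / (1 - μ)) := by
        rw [hc2]; ring
      have hc1P : 0 ≤ c1 * h' ^ (μ - 1) := mul_nonneg hc10 hpow0.le
      refine htri.trans ?_
      have hsum : ‖∫ t in (s₀ - δ')..(s₀ - h'), g t‖ + ‖∫ t in (s₀ - h')..(s₀ + h'), g t‖
          + ‖∫ t in (s₀ + h')..(s₀ + δ'), g t‖
          ≤ 2 * M * π ^ 2 * h' ^ (μ - 1) / (1 - μ) + 4 * M * h' ^ (μ - 1)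
            + 2 * M * π ^ 2 * h' ^ (μ - 1) / (1 - μ) :=
        add_le_add (add_le_add hside_l hmid) hside_r
      refine hsum.trans ?_
      rw [hc2eq]
      linarith
  -- conclusion
  have hDb : ‖D‖ ≤ K * h' ^ (μ - 1) := by
    rw [hDsub, hshift, hsplit]
    have htri := (norm_add_le ((∫ t in (s₀ - π)..(s₀ - δ'), g t)
      + (∫ t in (s₀ - δ')..(s₀ + δ'), g t)) (∫ t in (s₀ + δ')..(s₀ + π), g t)).trans
      (add_le_add_left (norm_add_le _ _) _)
    have hfarP : cfar * π ≤ (cfar * π) * h' ^ (μ - 1) :=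
      le_mul_of_one_le_right (mul_nonneg hcfar0 hπ.le) hpow1
    have hKP : K * h' ^ (μ - 1) = 2 * ((cfar * π) * h' ^ (μ - 1)) + c1 * h' ^ (μ - 1)
        + c2 * h' ^ (μ - 1) := by rw [hK]; ring
    rw [hKP]
    linarith
  rw [hDeriv, norm_smul, Real.norm_eq_abs, _root_.abs_of_nonneg (by positivity)]
  calc 1 / (2 * π) * ‖D‖ ≤ 1 / (2 * π) * (K * h' ^ (μ - 1)) := by gcongr
    _ ≤ (K / (2 * π) + 1) * h' ^ (μ - 1) := by
      have : 1 / (2 * π) * (K * h' ^ (μ - 1)) = (K / (2 * π)) * h' ^ (μ - 1) := by ring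
      rw [this]
      nlinarith [hpow0]
end

section
/- Let Ω be a doubly connected catenoid-slice domain: for 0 < r < R < 1 with R > r, consider the harmonic minimizer f(z) = r(R-r)/((1-r²)z̄) + (1-rR)z/(1-r²) on 𝔸(r,1) and c = -r(R-r)(1-rR)/(1-r²)² < 0. Then the map φ(z) = (Re f(z), Im f(z), 2√(-c)·log(1/|z|)) is a conformal harmonic immersion of 𝔸(r,1) into ℝ³, i.e. each coordinate is harmonic and φ satisfies the conformality relations |φ_x|² = |φ_y|², ⟨φ_x, φ_y⟩ = 0. -/
open Complex

lemma conf_aux (A B : ℂ) : ((A + B) / 2) ^ 2 + ((A - B) / (2 * I)) ^ 2 = A * B := by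
  have h : ((2 : ℂ) * I) ^ 2 = -4 := by
    rw [mul_pow, Complex.I_sq]; ring
  rw [div_pow, div_pow, h]
  field_simp
  ring

/-- The catenoidal lifting of the Nitsche-type minimizer is conformal and harmonic:
for `f(z) = r(R-r)/((1-r²) z̄) + (1-rR) z/(1-r²)` on `𝔸(r,1)` with
`c = -r(R-r)(1-rR)/(1-r²)² < 0`, the map
`φ(z) = (Re f, Im f, 2√(-c) log(1/|z|))` has harmonic coordinates (the first two
coming from a decomposition `f = g + conj h` with `g, h` holomorphic, the third being
a multiple of `Re(log z) = log|z|`) and satisfies the conformality relation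
`(u_z)² + (v_z)² + (w_z)² = 0`, where `u_z = (f_z + conj f_z̄)/2`,
`v_z = (f_z - conj f_z̄)/(2i)` and `w_z = -√(-c)/z`. -/
theorem stmt_17 (r R : ℝ) (hr : 0 < r) (hrR : r < R) (hR : R < 1) :
    let c : ℝ := -(r * (R - r) * (1 - r * R)) / (1 - r ^ 2) ^ 2
    let f : ℂ → ℂ := fun z =>
      (r * (R - r) : ℂ) / ((1 - r ^ 2 : ℂ) * (starRingEnd ℂ) z) +
        ((1 - r * R : ℂ) * z) / (1 - r ^ 2 : ℂ)
    let fz : ℂ := (1 - r * R : ℂ) / (1 - r ^ 2 : ℂ)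
    let fzb : ℂ → ℂ := fun z =>
      -(r * (R - r) : ℂ) / ((1 - r ^ 2 : ℂ) * ((starRingEnd ℂ) z) ^ 2)
    let w : ℂ → ℝ := fun z => 2 * Real.sqrt (-c) * Real.log (1 / ‖z‖)
    c < 0 ∧
    (∃ g h : ℂ → ℂ,
        DifferentiableOn ℂ g {z : ℂ | r < ‖z‖ ∧ ‖z‖ < 1} ∧
        DifferentiableOn ℂ h {z : ℂ | r < ‖z‖ ∧ ‖z‖ < 1} ∧
        ∀ z ∈ {z : ℂ | r < ‖z‖ ∧ ‖z‖ < 1}, f z = g z + (starRingEnd ℂ) (h z)) ∧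
    (∀ z ∈ {z : ℂ | r < ‖z‖ ∧ ‖z‖ < 1},
        w z = -2 * Real.sqrt (-c) * (Complex.log z).re) ∧
    (∀ z ∈ {z : ℂ | r < ‖z‖ ∧ ‖z‖ < 1},
        ((fz + (starRingEnd ℂ) (fzb z)) / 2) ^ 2 +
          ((fz - (starRingEnd ℂ) (fzb z)) / (2 * I)) ^ 2 +
          (-(Real.sqrt (-c) : ℂ) / z) ^ 2 = 0) := by
  intro c f fz fzb w
  have hD : (0:ℝ) < 1 - r ^ 2 := by nlinarith
  have hDc : ((1:ℂ) - (r:ℂ) ^ 2) ≠ 0 := by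
    have h := Complex.ofReal_ne_zero.2 (ne_of_gt hD)
    push_cast at h
    exact h
  have hc : c < 0 := by
    have h2 : 0 < 1 - r * R := by nlinarith
    have h1 : 0 < r * (R - r) * (1 - r * R) :=
      mul_pos (mul_pos hr (by linarith)) h2
    have h3 : 0 < (1 - r ^ 2) ^ 2 := by positivity
    simp only [c]
    apply div_neg_of_neg_of_pos <;> linarith
  have hcnn : (0:ℝ) ≤ -c := le_of_lt (by linarith)
  refine ⟨hc, ⟨fun z => ((1 - r * R : ℂ) * z) / (1 - r ^ 2 : ℂ),
      fun z => (r * (R - r) : ℂ) / ((1 - r ^ 2 : ℂ) * z), ?_, ?_, ?_⟩, ?_, ?_⟩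
  · exact (Differentiable.differentiableOn (by fun_prop (disch := exact hDc)))
  · apply DifferentiableOn.div (by fun_prop) (by fun_prop)
    intro z hz
    have hz0 : z ≠ 0 := by
      intro h; rw [h] at hz; simp at hz; linarith
    exact mul_ne_zero hDc hz0
  · intro z hz
    simp only [f, map_div₀, map_mul, map_sub, map_one, map_pow, Complex.conj_ofReal]
    ring
  · intro z hz
    have hz0 : z ≠ 0 := by
      intro h; rw [h] at hz; simp at hz; linarith
    simp only [w, one_div, Real.log_inv, Complex.log_re]
    ring
  · intro z hz
    have hz0 : z ≠ 0 := by
      intro h; rw [h] at hz; simp at hz; linarith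
    have hs : ((Real.sqrt (-c) : ℝ) : ℂ) ^ 2 = ((-c : ℝ) : ℂ) := by
      rw [← Complex.ofReal_pow, Real.sq_sqrt hcnn]
    simp only [fz, fzb, map_div₀, map_neg, map_mul, map_sub, map_one, map_pow,
      Complex.conj_ofReal, Complex.conj_conj]
    rw [show (-((Real.sqrt (-c) : ℝ) : ℂ) / z) ^ 2 = ((Real.sqrt (-c) : ℝ) : ℂ) ^ 2 / z ^ 2 by
      ring, hs, conf_aux]
    simp only [c]
    push_cast
    field_simp
    ring
end

section
/- Let 0 < r < 1 and R = 2r/(1+r²), and define w(z) = (r² + |z|²)/(z̄(1+r²)) on the annulus 𝔸(r,1). Then w is a harmonic map of 𝔸(r,1) onto 𝔸(R,1), and on the inner boundary |z| = r it satisfies |w_z| = |w_{z̄}| = 1/(1+r²); in particular the Jacobian J(z,w) = |w_z|² - |w_{z̄}|² vanishes on |z| = r, so w is not bi-Lipschitz up to the boundary. -/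
open Complex

lemma aux_norm_w (r : ℝ) (z : ℂ) :
    ‖((r ^ 2 : ℂ) + (‖z‖ ^ 2 : ℝ)) / ((starRingEnd ℂ) z * (1 + r ^ 2 : ℂ))‖
      = (r ^ 2 + ‖z‖ ^ 2) / (‖z‖ * (1 + r ^ 2)) := by
  have h1 : ((r ^ 2 : ℂ) + ((‖z‖ ^ 2 : ℝ) : ℂ)) = ((r ^ 2 + ‖z‖ ^ 2 : ℝ) : ℂ) := by
    push_cast; ring
  have h2 : ((1 : ℂ) + (r : ℂ) ^ 2) = ((1 + r ^ 2 : ℝ) : ℂ) := by push_cast; ring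
  rw [norm_div, norm_mul, h1, h2, Complex.norm_real, Complex.norm_real, RCLike.norm_conj]
  rw [Real.norm_of_nonneg (by positivity), Real.norm_of_nonneg (by positivity)]

lemma aux_ivt (r : ℝ) (hr0 : 0 < r) (hr1 : r < 1) (s : ℝ)
    (hs1 : 2 * r / (1 + r ^ 2) < s) (hs2 : s < 1) :
    ∃ t : ℝ, r < t ∧ t < 1 ∧ (r ^ 2 + t ^ 2) / (t * (1 + r ^ 2)) = s := by
  set f : ℝ → ℝ := fun t => (r ^ 2 + t ^ 2) / (t * (1 + r ^ 2)) with hf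
  have hcont : ContinuousOn f (Set.Icc r 1) := by
    apply ContinuousOn.div
    · fun_prop
    · fun_prop
    · intro t ht
      have : 0 < t := lt_of_lt_of_le hr0 ht.1
      positivity
  have hfr : f r = 2 * r / (1 + r ^ 2) := by
    simp only [hf]
    rw [div_eq_div_iff (by positivity) (by positivity)]
    ring
  have hf1 : f 1 = 1 := by
    simp only [hf]
    rw [div_eq_one_iff_eq (by positivity)]
    ring
  have := intermediate_value_Ioo (le_of_lt hr1) hcont
  rw [hfr, hf1] at this
  obtain ⟨t, ht, hft⟩ := this ⟨hs1, hs2⟩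
  exact ⟨t, ht.1, ht.2, hft⟩

/-- The critical Nitsche map `w(z) = (r² + |z|²)/(z̄ (1+r²))` with `R = 2r/(1+r²)`:
it is a harmonic map of `𝔸(r,1)` onto `𝔸(R,1)` (sum of a holomorphic function and
the conjugate of one), with `|w| = R` on `|z| = r` and `|w| = 1` on `|z| = 1`; its
Wirtinger derivatives are `w_z = 1/(1+r²)` and `w_z̄ = -r²/((1+r²) z̄²)`, and on the
inner circle `|z| = r` one has `|w_z| = |w_z̄| = 1/(1+r²)`, so the Jacobian
`|w_z|² - |w_z̄|²` vanishes there (hence `w` is not bi-Lipschitz up to the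
boundary). -/
theorem stmt_18 (r : ℝ) (hr0 : 0 < r) (hr1 : r < 1) :
    let R : ℝ := 2 * r / (1 + r ^ 2)
    let w : ℂ → ℂ := fun z =>
      ((r ^ 2 : ℂ) + (‖z‖ ^ 2 : ℝ)) / ((starRingEnd ℂ) z * (1 + r ^ 2 : ℂ))
    let wz : ℂ := 1 / (1 + r ^ 2 : ℂ)
    let wzb : ℂ → ℂ := fun z => -(r ^ 2 : ℂ) / ((1 + r ^ 2 : ℂ) * ((starRingEnd ℂ) z) ^ 2)
    (∀ z : ℂ, z ≠ 0 →
        w z = (r ^ 2 : ℂ) / ((1 + r ^ 2 : ℂ) * (starRingEnd ℂ) z) + z / (1 + r ^ 2 : ℂ)) ∧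
    (∃ g h : ℂ → ℂ,
        DifferentiableOn ℂ g {z : ℂ | r < ‖z‖ ∧ ‖z‖ < 1} ∧
        DifferentiableOn ℂ h {z : ℂ | r < ‖z‖ ∧ ‖z‖ < 1} ∧
        ∀ z ∈ {z : ℂ | r < ‖z‖ ∧ ‖z‖ < 1}, w z = g z + (starRingEnd ℂ) (h z)) ∧
    Set.MapsTo w {z : ℂ | r < ‖z‖ ∧ ‖z‖ < 1} {ζ : ℂ | R < ‖ζ‖ ∧ ‖ζ‖ < 1} ∧
    Set.SurjOn w {z : ℂ | r < ‖z‖ ∧ ‖z‖ < 1} {ζ : ℂ | R < ‖ζ‖ ∧ ‖ζ‖ < 1} ∧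
    (∀ z : ℂ, ‖z‖ = r → ‖w z‖ = R) ∧
    (∀ z : ℂ, ‖z‖ = 1 → ‖w z‖ = 1) ∧
    (∀ z : ℂ, ‖z‖ = r →
        ‖wz‖ = 1 / (1 + r ^ 2) ∧ ‖wzb z‖ = 1 / (1 + r ^ 2) ∧
          ‖wz‖ ^ 2 - ‖wzb z‖ ^ 2 = 0) := by
  intro R w wz wzb
  have hden : (0 : ℝ) < 1 + r ^ 2 := by positivity
  have hdenC : (1 + (r : ℂ) ^ 2) ≠ 0 := by
    have h2 : ((1 : ℂ) + (r : ℂ) ^ 2) = ((1 + r ^ 2 : ℝ) : ℂ) := by push_cast; ring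
    rw [h2]
    exact_mod_cast ne_of_gt hden
  -- key decomposition
  have hdecomp : ∀ z : ℂ, z ≠ 0 →
      w z = (r ^ 2 : ℂ) / ((1 + r ^ 2 : ℂ) * (starRingEnd ℂ) z) + z / (1 + r ^ 2 : ℂ) := by
    intro z hz
    have hzc : (starRingEnd ℂ) z ≠ 0 := by simpa using hz
    have hzz : ((‖z‖ ^ 2 : ℝ) : ℂ) = z * (starRingEnd ℂ) z := by
      rw [Complex.mul_conj]
      norm_cast
      rw [Complex.sq_norm]
    show ((r ^ 2 : ℂ) + (‖z‖ ^ 2 : ℝ)) / ((starRingEnd ℂ) z * (1 + r ^ 2 : ℂ)) = _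
    rw [hzz]
    field_simp
  refine ⟨hdecomp, ?_, ?_, ?_, ?_, ?_, ?_⟩
  · -- harmonic decomposition
    refine ⟨fun z => z / (1 + r ^ 2 : ℂ), fun z => (r ^ 2 : ℂ) / ((1 + r ^ 2 : ℂ) * z),
      ?_, ?_, ?_⟩
    · exact (differentiable_id.div_const _).differentiableOn
    · apply DifferentiableOn.div (differentiableOn_const _)
      · exact (differentiableOn_const _).mul differentiableOn_id
      · intro z hz
        have hz0 : z ≠ 0 := by
          intro h; rw [h] at hz; simp at hz; linarith
        exact mul_ne_zero hdenC hz0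
    · intro z hz
      have hz0 : z ≠ 0 := by
        intro h; rw [h] at hz; simp at hz; linarith
      rw [hdecomp z hz0]
      have : (starRingEnd ℂ) ((r ^ 2 : ℂ) / ((1 + r ^ 2 : ℂ) * z))
          = (r ^ 2 : ℂ) / ((1 + r ^ 2 : ℂ) * (starRingEnd ℂ) z) := by
        simp [map_div₀, map_mul, map_add, map_one, map_pow, Complex.conj_ofReal]
      rw [this]
      ring
  · -- MapsTo
    intro z hz
    obtain ⟨h1z, h2z⟩ := hz
    have ht0 : 0 < ‖z‖ := lt_trans hr0 h1z
    show R < ‖w z‖ ∧ ‖w z‖ < 1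
    rw [show ‖w z‖ = (r ^ 2 + ‖z‖ ^ 2) / (‖z‖ * (1 + r ^ 2)) from aux_norm_w r z]
    constructor
    · rw [div_lt_div_iff₀ hden (by positivity)]
      nlinarith [mul_pos (sub_pos.2 h1z) (sub_pos.2 h1z)]
    · rw [div_lt_one (by positivity)]
      nlinarith [mul_pos (sub_pos.2 h2z) (show (0:ℝ) < ‖z‖ - r ^ 2 by nlinarith)]
  · -- SurjOn
    intro ζ hζ
    obtain ⟨hR, h1ζ⟩ := hζ
    have hRpos : 0 < R := by positivity
    have hζ0 : ζ ≠ 0 := by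
      intro h; rw [h] at hR; simp at hR; linarith
    have hnζ : 0 < ‖ζ‖ := lt_trans hRpos hR
    obtain ⟨t, ht1, ht2, ht3⟩ := aux_ivt r hr0 hr1 ‖ζ‖ hR h1ζ
    have ht0 : 0 < t := lt_trans hr0 ht1
    set z : ℂ := (t : ℂ) * ζ / (‖ζ‖ : ℂ) with hzdef
    have hnz : ‖z‖ = t := by
      have habs0 : ‖ζ‖ ≠ 0 := by
        exact ne_of_gt hnζ
      rw [hzdef, norm_div, norm_mul, Complex.norm_real, Complex.norm_real,
        Real.norm_of_nonneg ht0.le, Real.norm_of_nonneg hnζ.le]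
      field_simp [habs0]
    refine ⟨z, ⟨by rw [hnz]; exact ht1, by rw [hnz]; exact ht2⟩, ?_⟩
    have key : (r ^ 2 + t ^ 2 : ℝ) = ‖ζ‖ * (t * (1 + r ^ 2)) := by
      rw [div_eq_iff (by positivity)] at ht3
      linarith [ht3]
    have keyC : ((r : ℂ) ^ 2 + (t : ℂ) ^ 2) = (‖ζ‖ : ℂ) * ((t : ℂ) * (1 + (r : ℂ) ^ 2)) := by
      exact_mod_cast congrArg (Complex.ofReal) key
    have hζζ : ζ * (starRingEnd ℂ) ζ = ((‖ζ‖ ^ 2 : ℝ) : ℂ) := by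
      rw [Complex.mul_conj]
      norm_cast
      rw [Complex.sq_norm]
    have hζc : (starRingEnd ℂ) ζ ≠ 0 := by simpa using hζ0
    have hζn : ((‖ζ‖ : ℝ) : ℂ) ≠ 0 := by exact_mod_cast ne_of_gt hnζ
    have htn : ((t : ℝ) : ℂ) ≠ 0 := by exact_mod_cast ne_of_gt ht0
    show ((r ^ 2 : ℂ) + (‖z‖ ^ 2 : ℝ)) / ((starRingEnd ℂ) z * (1 + r ^ 2 : ℂ)) = ζ
    rw [hnz, hzdef]
    have hconj : (starRingEnd ℂ) ((t : ℂ) * ζ / (‖ζ‖ : ℂ))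
        = (t : ℂ) * (starRingEnd ℂ) ζ / (‖ζ‖ : ℂ) := by
      simp [map_div₀, map_mul, Complex.conj_ofReal]
    rw [hconj]
    push_cast at hζζ ⊢
    field_simp
    linear_combination ((‖ζ‖ : ℝ) : ℂ) * keyC -
      (t : ℂ) * (1 + (r : ℂ) ^ 2) * hζζ
  · -- inner boundary
    intro z hz
    rw [show ‖w z‖ = (r ^ 2 + ‖z‖ ^ 2) / (‖z‖ * (1 + r ^ 2)) from aux_norm_w r z, hz]
    show _ = 2 * r / (1 + r ^ 2)
    rw [div_eq_div_iff (by positivity) (by positivity)]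
    ring
  · -- outer boundary
    intro z hz
    rw [show ‖w z‖ = (r ^ 2 + ‖z‖ ^ 2) / (‖z‖ * (1 + r ^ 2)) from aux_norm_w r z, hz]
    rw [div_eq_one_iff_eq (by positivity)]
    ring
  · -- Wirtinger derivatives on inner circle
    intro z hz
    have hwz : ‖wz‖ = 1 / (1 + r ^ 2) := by
      show ‖(1 : ℂ) / (1 + r ^ 2 : ℂ)‖ = _
      rw [norm_div, norm_one,
        show ((1 : ℂ) + (r : ℂ) ^ 2) = ((1 + r ^ 2 : ℝ) : ℂ) by push_cast; ring,
        Complex.norm_real, Real.norm_of_nonneg hden.le]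
    have hwzb : ‖wzb z‖ = 1 / (1 + r ^ 2) := by
      show ‖-(r ^ 2 : ℂ) / ((1 + r ^ 2 : ℂ) * ((starRingEnd ℂ) z) ^ 2)‖ = _
      simp only [norm_div, norm_neg, norm_mul, norm_pow, RCLike.norm_conj, hz]
      rw [show ((1 : ℂ) + (r : ℂ) ^ 2) = ((1 + r ^ 2 : ℝ) : ℂ) by push_cast; ring,
        Complex.norm_real, Real.norm_of_nonneg hr0.le,
        Complex.norm_real, Real.norm_of_nonneg hden.le]
      rw [div_eq_div_iff (by positivity) (by positivity)]
      ring
    exact ⟨hwz, hwzb, by rw [hwz, hwzb, sub_self]⟩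
end
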